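/- arXiv:2405.16882 — 5 statements merged into one kernel-verified Lean document; each statement's English description precedes it below -/
import Mathlib

section
/- Let I ⊂ R and J ⊂ T be nonzero proper graded ideals, identified with their extensions to S = R ⊗_K T. Then for every integer k ≥ 1 one has Ass((IJ)^k) = Ass(I^k) ∪ Ass(J^k), where all associated primes are computed over S. Consequently, Ass^∞(IJ) = Ass^∞(I) ∪ Ass^∞(J). -/
open MvPolynomial

noncomputable section

/-- The set of associated primes `Ass(L)` of the quotient by an ideal `L`. -/
def assOf {A : Type} [CommRing A] (L : Ideal A) : Set (Ideal A) :=
  associatedPrimes A (A ⧸ L)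

/-- `𝔄` is the stable value `Ass^∞(L)` of `Ass(L^k)` for all large `k`. -/
def IsStableAssValue {A : Type} [CommRing A] (L : Ideal A) (𝔄 : Set (Ideal A)) : Prop :=
  ∃ N : ℕ, ∀ k : ℕ, N ≤ k → assOf (L ^ k) = 𝔄

/-- `Ass^*(L) = ⋃_{k ≥ 1} Ass(L^k)`. -/
def assStar {A : Type} [CommRing A] (L : Ideal A) : Set (Ideal A) :=
  {p | ∃ k : ℕ, 1 ≤ k ∧ p ∈ assOf (L ^ k)}

/-- The local v-number `v_p(L)`: the least degree of a homogeneous `f` with `(L : f) = p`. -/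
def vnum {σ K : Type} [Field K] (L p : Ideal (MvPolynomial σ K)) : ℕ :=
  sInf {d : ℕ | ∃ f : MvPolynomial σ K, f.IsHomogeneous d ∧ L.colon (Ideal.span {f}) = p}

/-- The v-number `v(L) = min_{p ∈ Ass(L)} v_p(L)`. -/
def vnumber {σ K : Type} [Field K] (L : Ideal (MvPolynomial σ K)) : ℕ :=
  sInf {d : ℕ | ∃ p ∈ assOf L, ∃ f : MvPolynomial σ K,
    f.IsHomogeneous d ∧ L.colon (Ideal.span {f}) = p}

/-- The initial degree `α(L)`: the least `d` such that `L` contains a nonzero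
homogeneous element of degree `d`. -/
def alphaDeg {σ K : Type} [Field K] (L : Ideal (MvPolynomial σ K)) : ℕ :=
  sInf {d : ℕ | ∃ f ∈ L, f ≠ 0 ∧ MvPolynomial.IsHomogeneous f d}

/-- A graded (homogeneous) ideal: one containing all homogeneous components
of each of its elements. -/
def IsGradedIdeal {σ K : Type} [Field K] (I : Ideal (MvPolynomial σ K)) : Prop :=
  ∀ f ∈ I, ∀ d : ℕ, homogeneousComponent d f ∈ I

/-- A monomial ideal: an ideal generated by monomials. -/
def IsMonomialIdeal {σ K : Type} [Field K] (I : Ideal (MvPolynomial σ K)) : Prop :=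
  ∃ G : Set (σ →₀ ℕ), I = Ideal.span ((fun a => (monomial a (1 : K))) '' G)

/-!
Put `A = I·S` and `B = J·S`. Writing `S = T[x]`, a polynomial lies in `A` iff applying any
`K`-linear functional `T → K` to its coefficients yields an element of `I`; expanding the
coefficients in a basis of their (finite-dimensional) span then shows `A ∩ B = AB`, and that a
nonzero `g ∈ J` is a nonzerodivisor on `S/A`. Consequently `S/(A ∩ B)` embeds into
`S/A × S/B`, while multiplication by `g` embeds `S/A` into `S/(A ∩ B)`, which gives
`Ass(AB) = Ass(A) ∪ Ass(B)`. Applied to `I^k` and `J^k` this is the first claim, and the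
stable values are compared at any sufficiently large `k`.
-/

section AssociatedPrimes

variable {A : Type} [CommRing A]

theorem assOf_inf_subset (L L' : Ideal A) : assOf (L ⊓ L') ⊆ assOf L ∪ assOf L' := by
  let f : A ⧸ (L ⊓ L') →ₗ[A] (A ⧸ L) × (A ⧸ L') :=
    (L ⊓ L').liftQ (L.mkQ.prod L'.mkQ) (by simp [LinearMap.ker_prod])
  have hf : Function.Injective f := by
    rw [← LinearMap.ker_eq_bot, Submodule.ker_liftQ_eq_bot]
    simp [LinearMap.ker_prod]
  rw [assOf, assOf, assOf, ← associatedPrimes.prod]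
  exact associatedPrimes.subset_of_injective hf

theorem assOf_subset_assOf_inf {L L' : Ideal A} {g : A} (hg : g ∈ L')
    (hreg : ∀ x, g * x ∈ L → x ∈ L) : assOf L ⊆ assOf (L ⊓ L') := by
  let f : A ⧸ L →ₗ[A] A ⧸ (L ⊓ L') :=
    L.liftQ ((L ⊓ L').mkQ ∘ₗ LinearMap.mulLeft A g) fun x hx => by
      simp only [LinearMap.mem_ker, LinearMap.comp_apply, Submodule.mkQ_apply,
        Submodule.Quotient.mk_eq_zero, LinearMap.mulLeft_apply]
      exact ⟨L.mul_mem_left g hx, L'.mul_mem_right x hg⟩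
  have hf : Function.Injective f := by
    rw [← LinearMap.ker_eq_bot, Submodule.ker_liftQ_eq_bot]
    intro x hx
    simp only [LinearMap.mem_ker, LinearMap.comp_apply, Submodule.mkQ_apply,
      Submodule.Quotient.mk_eq_zero, LinearMap.mulLeft_apply] at hx
    exact hreg x hx.1
  exact associatedPrimes.subset_of_injective hf

end AssociatedPrimes

namespace MvPolynomial

section MapCoeffs

variable {K T σ : Type*} [Field K] [CommRing T] [Algebra K T]

def mapCoeffs (l : T →ₗ[K] K) : MvPolynomial σ T →ₗ[K] MvPolynomial σ K :=
  (AddMonoidAlgebra.coeffLinearEquiv K).symm.toLinearMap ∘ₗ Finsupp.mapRange.linearMap l ∘ₗ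
    (AddMonoidAlgebra.coeffLinearEquiv K).toLinearMap

@[simp]
theorem coeff_mapCoeffs (l : T →ₗ[K] K) (p : MvPolynomial σ T) (ν : σ →₀ ℕ) :
    coeff ν (mapCoeffs l p) = l (coeff ν p) := rfl

theorem mapCoeffs_map_mul (l : T →ₗ[K] K) (a : MvPolynomial σ K) (q : MvPolynomial σ T) :
    mapCoeffs l (map (algebraMap K T) a * q) = a * mapCoeffs l q := by
  classical
  ext ν
  simp only [coeff_mapCoeffs, coeff_mul, coeff_map, map_sum, ← Algebra.smul_def, map_smul,
    smul_eq_mul]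

theorem mapCoeffs_C_mul (l : T →ₗ[K] K) (g : T) (q : MvPolynomial σ T) :
    mapCoeffs l (C g * q) = mapCoeffs (l ∘ₗ LinearMap.mulLeft K g) q := by
  ext ν
  simp [coeff_C_mul]

theorem mapCoeffs_mem_of_mem_map {I : Ideal (MvPolynomial σ K)} {q : MvPolynomial σ T}
    (hq : q ∈ I.map (map (algebraMap K T))) (l : T →ₗ[K] K) : mapCoeffs l q ∈ I := by
  suffices ∀ h, mapCoeffs l (h * q) ∈ I by simpa using this 1
  induction hq using Submodule.span_induction with
  | mem x hx =>
    obtain ⟨a, ha, rfl⟩ := hx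
    intro h
    rw [mul_comm, mapCoeffs_map_mul]
    exact I.mul_mem_right _ ha
  | zero => simp
  | add x y _ _ hx hy => intro h; rw [mul_add, map_add]; exact I.add_mem (hx h) (hy h)
  | smul s x _ hx => intro h; rw [smul_eq_mul, ← mul_assoc]; exact hx (h * s)

theorem exists_eq_sum_map_mul_C (q : MvPolynomial σ T) :
    ∃ (r : ℕ) (l : Fin r → T →ₗ[K] K) (t : Fin r → T),
      (∀ j, t j ∈ Submodule.span K (q.coeffs : Set T)) ∧
      q = ∑ j, map (algebraMap K T) (mapCoeffs (l j) q) * C (t j) := by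
  classical
  set U := Submodule.span K (q.coeffs : Set T)
  let b := Module.finBasis K U
  have hmem (ν : σ →₀ ℕ) : coeff ν q ∈ U := by
    by_cases hν : ν ∈ q.support
    · exact Submodule.subset_span (coeff_mem_coeffs ν (mem_support_iff.mp hν))
    · rw [notMem_support_iff.mp hν]; exact U.zero_mem
  choose E hE using fun j => LinearMap.exists_extend (b.coord j)
  refine ⟨_, E, fun j => b j, fun j => (b j).2, ?_⟩
  ext ν
  have hEν (j) : E j (coeff ν q) = b.repr ⟨coeff ν q, hmem ν⟩ j :=
    LinearMap.congr_fun (hE j) ⟨coeff ν q, hmem ν⟩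
  have := congrArg U.subtype (b.sum_repr ⟨coeff ν q, hmem ν⟩)
  simp only [map_sum, map_smul, Submodule.subtype_apply] at this
  simp only [coeff_sum, mul_comm _ (C _), coeff_C_mul, coeff_map, coeff_mapCoeffs, hEν,
    ← Algebra.commutes, ← Algebra.smul_def, this]

theorem mem_map_algebraMap_iff {I : Ideal (MvPolynomial σ K)} {q : MvPolynomial σ T} :
    q ∈ I.map (map (algebraMap K T)) ↔ ∀ l : T →ₗ[K] K, mapCoeffs l q ∈ I := by
  refine ⟨mapCoeffs_mem_of_mem_map, fun hq => ?_⟩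
  obtain ⟨r, l, t, -, hqt⟩ := exists_eq_sum_map_mul_C (K := K) q
  rw [hqt]
  exact Ideal.sum_mem _ fun j _ => Ideal.mul_mem_right _ _ (Ideal.mem_map_of_mem _ (hq (l j)))

theorem map_algebraMap_inf_map_C (I : Ideal (MvPolynomial σ K)) (J : Ideal T) :
    I.map (map (algebraMap K T)) ⊓ J.map C = I.map (map (algebraMap K T)) * J.map C := by
  refine le_antisymm (fun q ⟨hqI, hqJ⟩ => ?_) Ideal.mul_le_inf
  obtain ⟨r, l, t, ht, hqt⟩ := exists_eq_sum_map_mul_C (K := K) q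
  have hcoeffs : Submodule.span K (q.coeffs : Set T) ≤ J.restrictScalars K := by
    refine Submodule.span_le.mpr fun x hx => ?_
    obtain ⟨ν, -, rfl⟩ := mem_coeffs_iff.mp hx
    exact mem_map_C_iff.mp hqJ ν
  rw [hqt]
  exact Ideal.sum_mem _ fun j _ => Ideal.mul_mem_mul
    (Ideal.mem_map_of_mem _ (mapCoeffs_mem_of_mem_map hqI (l j)))
    (Ideal.mem_map_of_mem _ (hcoeffs (ht j)))

theorem mem_map_algebraMap_of_C_mul_mem {I : Ideal (MvPolynomial σ K)} {g : T}
    (hg : IsLeftRegular g) {q : MvPolynomial σ T}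
    (hgq : C g * q ∈ I.map (map (algebraMap K T))) : q ∈ I.map (map (algebraMap K T)) := by
  obtain ⟨h, hh⟩ := (LinearMap.mulLeft K g).exists_leftInverse_of_injective
    (LinearMap.ker_eq_bot.mpr hg)
  refine mem_map_algebraMap_iff.mpr fun l => ?_
  have := mapCoeffs_mem_of_mem_map hgq (l ∘ₗ h)
  rwa [mapCoeffs_C_mul, LinearMap.comp_assoc, hh, LinearMap.comp_id] at this

end MapCoeffs

section Sum

variable {K σ τ : Type*} [Field K]

theorem map_sumAlgEquiv_map_rename_inl (I : Ideal (MvPolynomial σ K)) :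
    (I.map (rename Sum.inl)).map (sumAlgEquiv K σ τ) =
      I.map (map (algebraMap K (MvPolynomial τ K))) := by
  rw [← Ideal.map_coe (rename _), ← Ideal.map_coe (sumAlgEquiv K σ τ), Ideal.map_map]
  congr 1
  exact congrArg AlgHom.toRingHom (sumAlgEquiv_comp_rename_inl K σ τ)

theorem map_sumAlgEquiv_map_rename_inr (J : Ideal (MvPolynomial τ K)) :
    (J.map (rename Sum.inr)).map (sumAlgEquiv K σ τ) = J.map C := by
  rw [← Ideal.map_coe (rename _), ← Ideal.map_coe (sumAlgEquiv K σ τ), Ideal.map_map]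
  congr 1
  exact congrArg AlgHom.toRingHom (sumAlgEquiv_comp_rename_inr K σ τ)

theorem map_rename_inl_inf_map_rename_inr (I : Ideal (MvPolynomial σ K))
    (J : Ideal (MvPolynomial τ K)) :
    I.map (rename Sum.inl) ⊓ J.map (rename Sum.inr) =
      I.map (rename Sum.inl) * J.map (rename Sum.inr) := by
  set e := sumAlgEquiv K σ τ
  refine le_antisymm ?_ Ideal.mul_le_inf
  calc I.map (rename Sum.inl) ⊓ J.map (rename Sum.inr)
      = ((I.map (rename Sum.inl) ⊓ J.map (rename Sum.inr)).map e).comap e :=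
        (Ideal.comap_map_of_bijective _ e.bijective).symm
    _ ≤ ((I.map (rename Sum.inl) * J.map (rename Sum.inr)).map e).comap e := by
        refine Ideal.comap_mono ((Ideal.map_inf_le e).trans ?_)
        rw [Ideal.map_mul, map_sumAlgEquiv_map_rename_inl, map_sumAlgEquiv_map_rename_inr,
          map_algebraMap_inf_map_C]
    _ = I.map (rename Sum.inl) * J.map (rename Sum.inr) :=
        Ideal.comap_map_of_bijective _ e.bijective

theorem mem_map_rename_inl_of_rename_inr_mul_mem {I : Ideal (MvPolynomial σ K)}
    {g : MvPolynomial τ K} (hg : g ≠ 0) {x : MvPolynomial (σ ⊕ τ) K}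
    (hgx : rename Sum.inr g * x ∈ I.map (rename Sum.inl)) : x ∈ I.map (rename Sum.inl) := by
  set e := sumAlgEquiv K σ τ
  have heg : e (rename Sum.inr g) = C g :=
    AlgHom.congr_fun (sumAlgEquiv_comp_rename_inr K σ τ) g
  rw [← Ideal.comap_map_of_bijective _ e.bijective (I := I.map _), Ideal.mem_comap,
    map_sumAlgEquiv_map_rename_inl] at hgx ⊢
  rw [map_mul, heg] at hgx
  exact mem_map_algebraMap_of_C_mul_mem (IsRegular.of_ne_zero hg).left hgx

theorem mem_map_rename_inr_of_rename_inl_mul_mem {J : Ideal (MvPolynomial τ K)}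
    {f : MvPolynomial σ K} (hf : f ≠ 0) {x : MvPolynomial (σ ⊕ τ) K}
    (hfx : rename Sum.inl f * x ∈ J.map (rename Sum.inr)) : x ∈ J.map (rename Sum.inr) := by
  set e := renameEquiv K (Equiv.sumComm σ τ)
  have hmap : (J.map (rename Sum.inr)).map e = J.map (rename Sum.inl) := by
    rw [← Ideal.map_coe (rename _), ← Ideal.map_coe e, Ideal.map_map]
    congr 1
    ext <;> simp [e]
  have hef : e (rename Sum.inl f) = rename Sum.inr f := by
    rw [renameEquiv_apply, rename_rename]
    rfl
  rw [← Ideal.comap_map_of_bijective _ e.bijective (I := J.map _), Ideal.mem_comap,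
    hmap] at hfx ⊢
  rw [map_mul, hef] at hfx
  exact mem_map_rename_inl_of_rename_inr_mul_mem hf hfx

end Sum

theorem assOf_map_rename_inl_mul_map_rename_inr {K σ τ : Type} [Field K]
    {I : Ideal (MvPolynomial σ K)} {J : Ideal (MvPolynomial τ K)} (hI : I ≠ ⊥) (hJ : J ≠ ⊥) :
    assOf (I.map (rename Sum.inl) * J.map (rename Sum.inr)) =
      assOf (I.map (rename Sum.inl)) ∪ assOf (J.map (rename Sum.inr)) := by
  obtain ⟨f, hfI, hf⟩ := Submodule.exists_mem_ne_zero_of_ne_bot hI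
  obtain ⟨g, hgJ, hg⟩ := Submodule.exists_mem_ne_zero_of_ne_bot hJ
  rw [← map_rename_inl_inf_map_rename_inr]
  refine (assOf_inf_subset _ _).antisymm (Set.union_subset ?_ ?_)
  · exact assOf_subset_assOf_inf (Ideal.mem_map_of_mem _ hgJ)
      fun _ => mem_map_rename_inl_of_rename_inr_mul_mem hg
  · rw [inf_comm]
    exact assOf_subset_assOf_inf (Ideal.mem_map_of_mem _ hfI)
      fun _ => mem_map_rename_inr_of_rename_inl_mul_mem hf

end MvPolynomial

theorem stmt0_general {K : Type} [Field K] {n m : ℕ}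
    (I : Ideal (MvPolynomial (Fin n) K)) (J : Ideal (MvPolynomial (Fin m) K))
    (hInz : I ≠ ⊥)
    (hJnz : J ≠ ⊥)
    (eI eJ : Ideal (MvPolynomial (Fin n ⊕ Fin m) K))
    (heI : eI = Ideal.map (rename Sum.inl) I)
    (heJ : eJ = Ideal.map (rename Sum.inr) J) :
    (∀ k : ℕ, 1 ≤ k → assOf ((eI * eJ) ^ k) = assOf (eI ^ k) ∪ assOf (eJ ^ k)) ∧
    (∀ AI AJ AIJ : Set (Ideal (MvPolynomial (Fin n ⊕ Fin m) K)),
      IsStableAssValue eI AI → IsStableAssValue eJ AJ →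
      IsStableAssValue (eI * eJ) AIJ → AIJ = AI ∪ AJ) := by
  have hpow (k : ℕ) : assOf ((eI * eJ) ^ k) = assOf (eI ^ k) ∪ assOf (eJ ^ k) := by
    rw [heI, heJ, mul_pow, ← Ideal.map_pow, ← Ideal.map_pow]
    exact assOf_map_rename_inl_mul_map_rename_inr (pow_ne_zero k hInz) (pow_ne_zero k hJnz)
  refine ⟨fun k _ => hpow k, ?_⟩
  rintro AI AJ AIJ ⟨N₁, hI⟩ ⟨N₂, hJ⟩ ⟨N₃, hIJ⟩
  set k := max N₁ (max N₂ N₃)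
  rw [← hI k (by omega), ← hJ k (by omega), ← hIJ k (by omega)]
  exact hpow k

/-- Lemma 2.1: for nonzero proper graded ideals `I ⊂ R`, `J ⊂ T`,
identified with their extensions to `S = R ⊗_K T`, one has
`Ass((IJ)^k) = Ass(I^k) ∪ Ass(J^k)` for all `k ≥ 1`; consequently
`Ass^∞(IJ) = Ass^∞(I) ∪ Ass^∞(J)`. -/
theorem stmt0 {K : Type} [Field K] {n m : ℕ}
    (I : Ideal (MvPolynomial (Fin n) K)) (J : Ideal (MvPolynomial (Fin m) K))
    (hInz : I ≠ ⊥) (hIpr : I ≠ ⊤) (hIgr : IsGradedIdeal I)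
    (hJnz : J ≠ ⊥) (hJpr : J ≠ ⊤) (hJgr : IsGradedIdeal J)
    (eI eJ : Ideal (MvPolynomial (Fin n ⊕ Fin m) K))
    (heI : eI = Ideal.map (rename Sum.inl) I)
    (heJ : eJ = Ideal.map (rename Sum.inr) J) :
    (∀ k : ℕ, 1 ≤ k → assOf ((eI * eJ) ^ k) = assOf (eI ^ k) ∪ assOf (eJ ^ k)) ∧
    (∀ AI AJ AIJ : Set (Ideal (MvPolynomial (Fin n ⊕ Fin m) K)),
      IsStableAssValue eI AI → IsStableAssValue eJ AJ →
      IsStableAssValue (eI * eJ) AIJ → AIJ = AI ∪ AJ) :=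
  stmt0_general I J hInz hJnz eI eJ heI heJ
end
end

section
/- Let I ⊂ R and J ⊂ T be proper monomial ideals, identified with their extensions to S = R ⊗_K T, and let x^a = x_1^{a_1}···x_n^{a_n} and y^b = y_1^{b_1}···y_m^{b_m} be monomials in the x-variables and y-variables respectively. Then the colon ideal of the product satisfies (IJ : x^a y^b) = (I : x^a)·(J : y^b) as ideals of S. -/
open MvPolynomial

noncomputable section


lemma monSpan_mul {σ K : Type} [Field K] (A B : Set (σ →₀ ℕ)) :
    Ideal.span ((fun a => (monomial a (1 : K))) '' A) *
      Ideal.span ((fun a => (monomial a (1 : K))) '' B) =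
    Ideal.span ((fun a => (monomial a (1 : K))) '' (Set.image2 (· + ·) A B)) := by
  rw [Ideal.span_mul_span']
  congr 1
  rw [← Set.image2_mul, Set.image2_image_left, Set.image2_image_right, Set.image_image2]
  apply Set.image2_congr
  intro a _ b _
  simp [monomial_mul]

lemma map_monSpan {σ τ K : Type} [Field K] (f : σ → τ) (G : Set (σ →₀ ℕ)) :
    Ideal.map (rename f) (Ideal.span ((fun a => (monomial a (1 : K))) '' G)) =
    Ideal.span ((fun a => (monomial a (1 : K))) '' (Finsupp.mapDomain f '' G)) := by
  rw [Ideal.map_span, Set.image_image, Set.image_image]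
  congr 1
  funext a
  simp [rename_monomial]

theorem stmt6' {K : Type} [Field K] {n m : ℕ}
    (I : Ideal (MvPolynomial (Fin n) K)) (J : Ideal (MvPolynomial (Fin m) K))
    (hImon : ∃ G : Set (Fin n →₀ ℕ), I = Ideal.span ((fun a => (monomial a (1 : K))) '' G))
    (hJmon : ∃ G : Set (Fin m →₀ ℕ), J = Ideal.span ((fun a => (monomial a (1 : K))) '' G))
    (eI eJ : Ideal (MvPolynomial (Fin n ⊕ Fin m) K))
    (heI : eI = Ideal.map (rename Sum.inl) I)
    (heJ : eJ = Ideal.map (rename Sum.inr) J)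
    (a : Fin n →₀ ℕ) (b : Fin m →₀ ℕ)
    (xa yb : MvPolynomial (Fin n ⊕ Fin m) K)
    (hxa : xa = rename Sum.inl (monomial a (1 : K)))
    (hyb : yb = rename Sum.inr (monomial b (1 : K))) :
    (eI * eJ).colon (Ideal.span {xa * yb}) =
      (eI.colon (Ideal.span {xa})) * (eJ.colon (Ideal.span {yb})) := by
  classical
  obtain ⟨G, hG⟩ := hImon
  obtain ⟨H, hH⟩ := hJmon
  set a' : (Fin n ⊕ Fin m) →₀ ℕ := Finsupp.mapDomain Sum.inl a with ha'
  set b' : (Fin n ⊕ Fin m) →₀ ℕ := Finsupp.mapDomain Sum.inr b with hb'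
  have hxa' : xa = monomial a' (1 : K) := by rw [hxa, rename_monomial]
  have hyb' : yb = monomial b' (1 : K) := by rw [hyb, rename_monomial]
  have hxy : xa * yb = monomial (a' + b') (1 : K) := by
    rw [hxa', hyb', monomial_mul, one_mul]
  have heI' : eI = Ideal.span ((fun c => (monomial c (1 : K))) ''
      (Finsupp.mapDomain Sum.inl '' G)) := by rw [heI, hG, map_monSpan]
  have heJ' : eJ = Ideal.span ((fun c => (monomial c (1 : K))) ''
      (Finsupp.mapDomain Sum.inr '' H)) := by rw [heJ, hH, map_monSpan]
  have hprod : eI * eJ = Ideal.span ((fun c => (monomial c (1 : K))) ''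
      (Set.image2 (· + ·) (Finsupp.mapDomain Sum.inl '' G)
        (Finsupp.mapDomain Sum.inr '' H))) := by rw [heI', heJ', monSpan_mul]
  apply le_antisymm
  · intro f hf
    rw [Ideal.mem_colon_span_singleton, hprod] at hf
    rw [← f.support_sum_monomial_coeff]
    apply Ideal.sum_mem
    intro c hc
    have key : monomial c (1 : K) ∈
        (eI.colon (Ideal.span {xa})) * (eJ.colon (Ideal.span {yb})) := by
      have hmem : c + (a' + b') ∈ (f * (xa * yb)).support := by
        rw [hxy, mem_support_iff, coeff_mul_monomial, mul_one]
        exact mem_support_iff.mp hc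
      obtain ⟨s, hs, hle⟩ := mem_ideal_span_monomial_image.mp hf _ hmem
      obtain ⟨g, hg, h, hh, rfl⟩ := hs
      obtain ⟨g0, hg0, rfl⟩ := hg
      obtain ⟨h0, hh0, rfl⟩ := hh
      set cl := c.filter (fun s => s.isLeft = true) with hcl
      set cr := c.filter (fun s => ¬ s.isLeft = true) with hcr
      have hclr : cl + cr = c := Finsupp.filter_pos_add_filter_neg c _
      have hgle : Finsupp.mapDomain Sum.inl g0 ≤ cl + a' := by
        rw [Finsupp.le_def]
        intro s
        rcases s with i | j
        · have h1 := Finsupp.le_def.mp hle (Sum.inl i)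
          have h2 : Finsupp.mapDomain Sum.inr h0 (Sum.inl i) = 0 :=
            Finsupp.mapDomain_notin_range _ _ (by simp)
          have h3 : b' (Sum.inl i) = 0 :=
            Finsupp.mapDomain_notin_range _ _ (by simp)
          simp only [Finsupp.add_apply, h2, h3, add_zero] at h1
          simp only [Finsupp.add_apply, hcl, Finsupp.filter_apply]
          simpa using h1
        · have : Finsupp.mapDomain Sum.inl g0 (Sum.inr j) = 0 :=
            Finsupp.mapDomain_notin_range _ _ (by simp)
          simp [this]
      have hhle : Finsupp.mapDomain Sum.inr h0 ≤ cr + b' := by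
        rw [Finsupp.le_def]
        intro s
        rcases s with i | j
        · have : Finsupp.mapDomain Sum.inr h0 (Sum.inl i) = 0 :=
            Finsupp.mapDomain_notin_range _ _ (by simp)
          simp [this]
        · have h1 := Finsupp.le_def.mp hle (Sum.inr j)
          have h2 : Finsupp.mapDomain Sum.inl g0 (Sum.inr j) = 0 :=
            Finsupp.mapDomain_notin_range _ _ (by simp)
          have h3 : a' (Sum.inr j) = 0 :=
            Finsupp.mapDomain_notin_range _ _ (by simp)
          simp only [Finsupp.add_apply, h2, h3, zero_add] at h1
          simp only [Finsupp.add_apply, hcr, Finsupp.filter_apply]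
          simpa using h1
      have hl : monomial cl (1 : K) ∈ eI.colon (Ideal.span {xa}) := by
        rw [Ideal.mem_colon_span_singleton, hxa', monomial_mul, one_mul, heI']
        apply mem_ideal_span_monomial_image.mpr
        intro xi hxi
        rw [support_monomial, if_neg one_ne_zero, Finset.mem_singleton] at hxi
        subst hxi
        exact ⟨_, ⟨g0, hg0, rfl⟩, hgle⟩
      have hr : monomial cr (1 : K) ∈ eJ.colon (Ideal.span {yb}) := by
        rw [Ideal.mem_colon_span_singleton, hyb', monomial_mul, one_mul, heJ']
        apply mem_ideal_span_monomial_image.mpr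
        intro xi hxi
        rw [support_monomial, if_neg one_ne_zero, Finset.mem_singleton] at hxi
        subst hxi
        exact ⟨_, ⟨h0, hh0, rfl⟩, hhle⟩
      have : monomial c (1 : K) = monomial cl (1 : K) * monomial cr (1 : K) := by
        rw [monomial_mul, one_mul, hclr]
      rw [this]
      exact Ideal.mul_mem_mul hl hr
    have heq : monomial c (coeff c f) = C (coeff c f) * monomial c (1 : K) := by
      rw [C_mul_monomial, mul_one]
    rw [heq]
    exact Ideal.mul_mem_left _ _ key
  · rw [Ideal.mul_le]
    intro u hu v hv
    rw [Ideal.mem_colon_span_singleton] at hu hv ⊢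
    have : u * v * (xa * yb) = (u * xa) * (v * yb) := by ring
    rw [this]
    exact Ideal.mul_mem_mul hu hv


/-- equation (4.3): for proper monomial ideals `I ⊂ R`, `J ⊂ T`
identified with their extensions to `S`, and monomials `x^a`, `y^b` in the `x`- and
`y`-variables respectively, `(IJ : x^a y^b) = (I : x^a)·(J : y^b)` as ideals of `S`. -/
theorem stmt6 {K : Type} [Field K] {n m : ℕ}
    (I : Ideal (MvPolynomial (Fin n) K)) (J : Ideal (MvPolynomial (Fin m) K))
    (hIpr : I ≠ ⊤) (hImon : IsMonomialIdeal I)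
    (hJpr : J ≠ ⊤) (hJmon : IsMonomialIdeal J)
    (eI eJ : Ideal (MvPolynomial (Fin n ⊕ Fin m) K))
    (heI : eI = Ideal.map (rename Sum.inl) I)
    (heJ : eJ = Ideal.map (rename Sum.inr) J)
    (a : Fin n →₀ ℕ) (b : Fin m →₀ ℕ)
    (xa yb : MvPolynomial (Fin n ⊕ Fin m) K)
    (hxa : xa = rename Sum.inl (monomial a (1 : K)))
    (hyb : yb = rename Sum.inr (monomial b (1 : K))) :
    (eI * eJ).colon (Ideal.span {xa * yb}) =
      (eI.colon (Ideal.span {xa})) * (eJ.colon (Ideal.span {yb})) := by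
  exact stmt6' I J hImon hJmon eI eJ heI heJ a b xa yb hxa hyb
end
end

section
/- Let I_1,…,I_t ⊂ S = K[x_1,…,x_n] be nonzero proper monomial ideals with pairwise disjoint supports. Suppose that for each j = 1,…,t there exists k_j such that v(I_j^k) = α(I_j)·k − 1 for all k ≥ k_j. Then for every k ≥ 1, v((I_1 + ⋯ + I_t)^k) ≥ (min_{1≤j≤t} α(I_j))·k + ( ∑_{j=1}^t α(I_j) − min_{1≤j≤t} α(I_j) − t ). -/
open MvPolynomial

noncomputable section

/-- Exponent vectors of the minimal monomial generators of a monomial ideal. -/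
def minimalMonGens {σ K : Type} [Field K] (I : Ideal (MvPolynomial σ K)) : Set (σ →₀ ℕ) :=
  {a | (monomial a (1 : K)) ∈ I ∧
    ∀ b : σ →₀ ℕ, (monomial b (1 : K)) ∈ I → b ≤ a → b = a}

/-- The support of a monomial ideal: the union of the supports of its
minimal monomial generators. -/
def suppIdeal {σ K : Type} [Field K] (I : Ideal (MvPolynomial σ K)) : Set σ :=
  ⋃ a ∈ minimalMonGens I, (a.support : Set σ)

/-!
Write `J = I_1 + ⋯ + I_t` and `L = J ^ k`; all of these are monomial ideals. The v-number of `L`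
is attained: a colon `L : x^w` that is maximal among colons by monomials outside `L` is prime,
since a monomial ideal that is prime on monomials is prime (multiply leading terms).

Now let `f` be homogeneous of degree `d` with `(L : f) = p` prime, and `x^e ∉ L` a monomial of
`f`. Since `J ≤ p`, the prime `p` contains a variable `x_{i_j}` from the support of each `I_j`, so
`x_{i_j} x^e ∈ L`. Let `m_j` be the largest `c` with `x^e ∈ I_j ^ c`. As the supports are
disjoint, `∑ m_j < k`, and the `I_j`-part of `x_{i_j} x^e` lies in `I_j ^ c_j` with
`c_j ≥ k - ∑_{l ≠ j} m_l`, hence has degree at least `α(I_j) c_j`. These parts again have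
disjoint supports, so `∑_j α(I_j) c_j ≤ d + t`, which rearranges to the bound.
-/

open MvPolynomial Finsupp
open scoped Pointwise

variable {σ K : Type} [Field K]

theorem monomial_one_mem_span_monomial_iff {G : Set (σ →₀ ℕ)} {a : σ →₀ ℕ} :
    monomial a (1 : K) ∈ Ideal.span ((fun g => monomial g (1 : K)) '' G) ↔
      ∃ g ∈ G, g ≤ a := by
  classical
  simp [mem_ideal_span_monomial_image, support_monomial]

theorem monomial_one_mem_of_le {I : Ideal (MvPolynomial σ K)} {a b : σ →₀ ℕ}
    (ha : monomial a (1 : K) ∈ I) (hab : a ≤ b) : monomial b (1 : K) ∈ I := by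
  have : monomial b (1 : K) = monomial (b - a) 1 * monomial a 1 := by
    rw [monomial_mul, one_mul, tsub_add_cancel_of_le hab]
  exact this ▸ I.mul_mem_left _ ha

theorem span_monomial_mul_span_monomial (G H : Set (σ →₀ ℕ)) :
    Ideal.span ((fun g => monomial g (1 : K)) '' G) *
        Ideal.span ((fun g => monomial g (1 : K)) '' H) =
      Ideal.span ((fun g => monomial g (1 : K)) '' (G + H)) := by
  rw [Ideal.span_mul_span']
  congr 1
  ext x
  simp only [Set.mem_mul, Set.mem_add, Set.mem_image]
  constructor
  · rintro ⟨_, ⟨g, hg, rfl⟩, _, ⟨h, hh, rfl⟩, rfl⟩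
    exact ⟨g + h, ⟨g, hg, h, hh, rfl⟩, by rw [monomial_mul, one_mul]⟩
  · rintro ⟨_, ⟨g, hg, h, hh, rfl⟩, rfl⟩
    exact ⟨_, ⟨g, hg, rfl⟩, _, ⟨h, hh, rfl⟩, by rw [monomial_mul, one_mul]⟩

theorem isMonomialIdeal_iff {I : Ideal (MvPolynomial σ K)} :
    IsMonomialIdeal I ↔ ∀ f ∈ I, ∀ m ∈ f.support, monomial m (1 : K) ∈ I := by
  constructor
  · rintro ⟨G, rfl⟩ f hf m hm
    obtain ⟨g, hg, hgm⟩ := mem_ideal_span_monomial_image.mp hf m hm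
    exact monomial_one_mem_of_le (Ideal.subset_span ⟨g, hg, rfl⟩) hgm
  · intro h
    refine ⟨{m | monomial m (1 : K) ∈ I}, le_antisymm (fun f hf => ?_) (Ideal.span_le.mpr ?_)⟩
    · exact mem_ideal_span_monomial_image.mpr fun m hm => ⟨m, h f hf m hm, le_rfl⟩
    · rintro _ ⟨m, hm, rfl⟩
      exact hm

theorem exists_mem_minimalMonGens_le {I : Ideal (MvPolynomial σ K)} {a : σ →₀ ℕ}
    (ha : monomial a (1 : K) ∈ I) : ∃ b ∈ minimalMonGens I, b ≤ a := by
  obtain ⟨b, ⟨hbI, hba⟩, hmin⟩ := wellFounded_lt.has_min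
    {b | monomial b (1 : K) ∈ I ∧ b ≤ a} ⟨a, ha, le_rfl⟩
  refine ⟨b, ⟨hbI, fun b' hb'I hb'b => ?_⟩, hba⟩
  by_contra hne
  exact hmin b' ⟨hb'I, hb'b.trans hba⟩ (lt_of_le_of_ne hb'b hne)

theorem support_subset_suppIdeal {I : Ideal (MvPolynomial σ K)} {b : σ →₀ ℕ}
    (hb : b ∈ minimalMonGens I) : ↑b.support ⊆ suppIdeal I :=
  Set.subset_biUnion_of_mem (u := fun a => (a.support : Set σ)) hb

theorem alphaDeg_le_degree {I : Ideal (MvPolynomial σ K)} {a : σ →₀ ℕ}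
    (ha : monomial a (1 : K) ∈ I) : alphaDeg I ≤ a.degree :=
  Nat.sInf_le ⟨_, ha, by simp [monomial_eq_zero], isHomogeneous_monomial _ rfl⟩

theorem one_le_degree_of_monomial_mem {I : Ideal (MvPolynomial σ K)} (hI : I ≠ ⊤)
    {a : σ →₀ ℕ} (ha : monomial a (1 : K) ∈ I) : 1 ≤ a.degree := by
  refine Nat.one_le_iff_ne_zero.mpr fun h => hI ?_
  rw [(degree_eq_zero_iff a).mp h, monomial_zero', C_1] at ha
  exact (Ideal.eq_top_iff_one I).mpr ha

theorem Ideal.IsPrime.exists_X_mem_of_monomial_mem {p : Ideal (MvPolynomial σ K)}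
    (hp : p.IsPrime) {b : σ →₀ ℕ} (hb : monomial b (1 : K) ∈ p) :
    ∃ i ∈ b.support, X i ∈ p := by
  rw [monomial_eq, C_1, one_mul, Finsupp.prod, hp.prod_mem_iff] at hb
  obtain ⟨i, hi, hip⟩ := hb
  exact ⟨i, hi, hp.mem_of_pow_mem _ hip⟩

theorem colon_span_singleton_mem_assOf {A : Type} [CommRing A] {L : Ideal A} {f : A}
    (h : (L.colon (Ideal.span {f})).IsPrime) : L.colon (Ideal.span {f}) ∈ assOf L := by
  refine ⟨h, Ideal.Quotient.mk L f, ?_⟩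
  have : L.colon (Ideal.span {f}) =
      (⊥ : Submodule A (A ⧸ L)).colon {Ideal.Quotient.mk L f} := by
    ext r
    rw [Ideal.mem_colon_span_singleton, Submodule.mem_colon_singleton, Submodule.mem_bot,
      Algebra.smul_def, Ideal.Quotient.algebraMap_eq, ← map_mul, Ideal.Quotient.eq_zero_iff_mem]
  rw [← this, h.radical]

theorem Finsupp.sum_le_of_support_subset {ι : Type*} [Fintype ι] {T : ι → Set σ}
    (hT : Pairwise fun i j => Disjoint (T i) (T j)) {b : ι → σ →₀ ℕ} {a : σ →₀ ℕ}
    (hbT : ∀ j, ↑(b j).support ⊆ T j) (hba : ∀ j, b j ≤ a) : ∑ j, b j ≤ a := by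
  intro x
  rw [Finsupp.coe_finsetSum, Finset.sum_apply]
  by_cases hx : ∃ j, x ∈ T j
  · obtain ⟨j, hj⟩ := hx
    rw [Finset.sum_eq_single j (fun l _ hl => ?_) (by simp)]
    · exact hba j x
    · by_contra hne
      exact Set.disjoint_left.mp (hT hl) (hbT l (Finsupp.mem_support_iff.mpr hne)) hj
  · push Not at hx
    simp only [Finset.sum_eq_zero fun j _ =>
      Finsupp.notMem_support_iff.mp fun h => hx j (hbT j h), zero_le]

theorem Finsupp.le_of_le_add_single {a b : σ →₀ ℕ} {i : σ} (h : a ≤ b + single i 1)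
    (hi : a i = 0) : a ≤ b := by
  intro x
  by_cases hx : x = i
  · simp [hx, hi]
  · simpa [single_apply, Ne.symm hx] using h x

theorem mul_add_sum_le_sum_mul_add {ι : Type*} [Fintype ι] [Nonempty ι] {α c m : ι → ℕ}
    {μ k : ℕ} (hμ : ∀ j, μ ≤ α j) (hk : ∑ j, m j < k)
    (hc : ∀ j, k + m j ≤ c j + ∑ l, m l) :
    μ * k + ∑ j, α j ≤ ∑ j, c j * α j + μ := by
  obtain ⟨j₀⟩ := ‹Nonempty ι›
  have hμA : μ ≤ ∑ j, α j :=
    (hμ j₀).trans (Finset.single_le_sum (fun _ _ => zero_le) (Finset.mem_univ j₀))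
  zify at *
  set M := ∑ l, (m l : ℤ)
  set A := ∑ j, (α j : ℤ)
  have h1 : ∑ j, ((k : ℤ) - M + m j) * α j ≤ ∑ j, (c j : ℤ) * α j :=
    Finset.sum_le_sum fun j _ => mul_le_mul_of_nonneg_right (by linarith [hc j]) (by positivity)
  have h2 : ∑ j, ((k : ℤ) - M + m j) * α j = (k - M) * A + ∑ j, (m j : ℤ) * α j := by
    rw [Finset.mul_sum, ← Finset.sum_add_distrib]
    exact Finset.sum_congr rfl fun j _ => by ring
  have h3 : (μ : ℤ) * M ≤ ∑ j, (m j : ℤ) * α j := by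
    rw [Finset.mul_sum]
    refine Finset.sum_le_sum fun j _ => ?_
    rw [mul_comm]
    exact mul_le_mul_of_nonneg_left (hμ j) (by positivity)
  -- the slack is `(k - M - 1) * (A - μ) ≥ 0`
  nlinarith [mul_nonneg (by linarith : (0 : ℤ) ≤ k - M - 1)
    (by linarith : (0 : ℤ) ≤ A - μ)]

namespace IsMonomialIdeal

variable {I I' L : Ideal (MvPolynomial σ K)}

theorem mem_iff (hI : IsMonomialIdeal I) {f : MvPolynomial σ K} :
    f ∈ I ↔ ∀ m ∈ f.support, monomial m (1 : K) ∈ I := by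
  refine ⟨isMonomialIdeal_iff.mp hI f, fun h => ?_⟩
  obtain ⟨G, rfl⟩ := hI
  exact mem_ideal_span_monomial_image.mpr fun m hm =>
    monomial_one_mem_span_monomial_iff.mp (h m hm)

theorem mul (hI : IsMonomialIdeal I) (hI' : IsMonomialIdeal I') : IsMonomialIdeal (I * I') := by
  obtain ⟨G, rfl⟩ := hI
  obtain ⟨H, rfl⟩ := hI'
  exact ⟨G + H, span_monomial_mul_span_monomial G H⟩

theorem pow (hI : IsMonomialIdeal I) (c : ℕ) : IsMonomialIdeal (I ^ c) := by
  induction c with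
  | zero => exact ⟨{0}, by simp [Ideal.one_eq_top]⟩
  | succ c ih => exact pow_succ I c ▸ ih.mul hI

theorem add (hI : IsMonomialIdeal I) (hI' : IsMonomialIdeal I') : IsMonomialIdeal (I + I') := by
  obtain ⟨G, rfl⟩ := hI
  obtain ⟨H, rfl⟩ := hI'
  exact ⟨G ∪ H, by rw [Set.image_union, Ideal.span_union, Submodule.add_eq_sup]⟩

theorem sum {ι : Type*} {s : Finset ι} {I : ι → Ideal (MvPolynomial σ K)}
    (hI : ∀ j ∈ s, IsMonomialIdeal (I j)) : IsMonomialIdeal (∑ j ∈ s, I j) :=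
  Finset.sum_induction _ _ (fun _ _ => add) ⟨∅, by simp⟩ hI

theorem colon_monomial (hI : IsMonomialIdeal I) (w : σ →₀ ℕ) :
    IsMonomialIdeal (I.colon (Ideal.span {monomial w (1 : K)})) := by
  refine isMonomialIdeal_iff.mpr fun f hf m hm => ?_
  rw [Ideal.mem_colon_span_singleton] at hf ⊢
  have hmw : m + w ∈ (f * monomial w 1).support := by
    simpa [MvPolynomial.mem_support_iff] using hm
  simpa [monomial_mul] using hI.mem_iff.mp hf _ hmw

theorem exists_add_le_of_monomial_mem_mul (hI : IsMonomialIdeal I) (hI' : IsMonomialIdeal I')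
    {a : σ →₀ ℕ} (ha : monomial a (1 : K) ∈ I * I') :
    ∃ g h, monomial g (1 : K) ∈ I ∧ monomial h (1 : K) ∈ I' ∧ g + h ≤ a := by
  obtain ⟨G, rfl⟩ := hI
  obtain ⟨H, rfl⟩ := hI'
  rw [span_monomial_mul_span_monomial, monomial_one_mem_span_monomial_iff] at ha
  obtain ⟨_, ⟨g, hg, h, hh, rfl⟩, hle⟩ := ha
  exact ⟨g, h, Ideal.subset_span ⟨g, hg, rfl⟩, Ideal.subset_span ⟨h, hh, rfl⟩, hle⟩

theorem monomial_mem_or_mem_of_mem_add (hI : IsMonomialIdeal I) (hI' : IsMonomialIdeal I')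
    {a : σ →₀ ℕ} (ha : monomial a (1 : K) ∈ I + I') :
    monomial a (1 : K) ∈ I ∨ monomial a (1 : K) ∈ I' := by
  obtain ⟨G, rfl⟩ := hI
  obtain ⟨H, rfl⟩ := hI'
  rw [Submodule.add_eq_sup, ← Ideal.span_union, ← Set.image_union,
    monomial_one_mem_span_monomial_iff] at ha
  obtain ⟨g, hg | hg, hle⟩ := ha
  · exact .inl (monomial_one_mem_of_le (Ideal.subset_span ⟨g, hg, rfl⟩) hle)
  · exact .inr (monomial_one_mem_of_le (Ideal.subset_span ⟨g, hg, rfl⟩) hle)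

theorem exists_monomial_mem_of_mem_sum {ι : Type*} {s : Finset ι}
    {I : ι → Ideal (MvPolynomial σ K)} (hI : ∀ j ∈ s, IsMonomialIdeal (I j))
    {a : σ →₀ ℕ}
    (ha : monomial a (1 : K) ∈ ∑ j ∈ s, I j) : ∃ j ∈ s, monomial a (1 : K) ∈ I j := by
  classical
  induction s using Finset.induction_on with
  | empty => simp [monomial_eq_zero] at ha
  | insert j s hj ih =>
    rw [Finset.sum_insert hj] at ha
    have hs : ∀ i ∈ s, IsMonomialIdeal (I i) := fun i hi => hI i (Finset.mem_insert_of_mem hi)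
    rcases (hI j (Finset.mem_insert_self j s)).monomial_mem_or_mem_of_mem_add (sum hs) ha
      with h | h
    · exact ⟨j, Finset.mem_insert_self j s, h⟩
    · obtain ⟨i, hi, h⟩ := ih hs h
      exact ⟨i, Finset.mem_insert_of_mem hi, h⟩

theorem mul_le_degree_of_monomial_mem_pow (hI : IsMonomialIdeal I) {d : ℕ}
    (hd : ∀ g, monomial g (1 : K) ∈ I → d ≤ g.degree) {c : ℕ} {a : σ →₀ ℕ}
    (ha : monomial a (1 : K) ∈ I ^ c) : c * d ≤ a.degree := by
  induction c generalizing a with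
  | zero => simp
  | succ c ih =>
    rw [pow_succ'] at ha
    obtain ⟨g, h, hg, hh, hle⟩ := hI.exists_add_le_of_monomial_mem_mul (hI.pow c) ha
    calc (c + 1) * d = d + c * d := by ring
      _ ≤ g.degree + h.degree := add_le_add (hd g hg) (ih hh)
      _ = (g + h).degree := (map_add _ g h).symm
      _ ≤ a.degree := degree_mono hle

theorem exists_le_support_subset_of_monomial_mem_pow (hI : IsMonomialIdeal I) {c : ℕ}
    {a : σ →₀ ℕ} (ha : monomial a (1 : K) ∈ I ^ c) :
    ∃ b ≤ a, ↑b.support ⊆ suppIdeal I ∧ monomial b (1 : K) ∈ I ^ c := by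
  classical
  induction c generalizing a with
  | zero => exact ⟨0, zero_le, by simp, by simp⟩
  | succ c ih =>
    rw [pow_succ'] at ha
    obtain ⟨g, h, hg, hh, hle⟩ := hI.exists_add_le_of_monomial_mem_mul (hI.pow c) ha
    obtain ⟨g', hg', hg'g⟩ := exists_mem_minimalMonGens_le hg
    obtain ⟨h', hh'h, hh'T, hh'⟩ := ih hh
    refine ⟨g' + h', (add_le_add hg'g hh'h).trans hle, ?_, ?_⟩
    · exact (Finset.coe_subset.mpr Finsupp.support_add).trans
        (by push_cast; exact Set.union_subset (support_subset_suppIdeal hg') hh'T)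
    · rw [← one_mul (1 : K), ← monomial_mul, pow_succ']
      exact Ideal.mul_mem_mul hg'.1 hh'

theorem exists_le_of_monomial_mem_sum_pow {ι : Type*} [Fintype ι]
    {I : ι → Ideal (MvPolynomial σ K)} (hI : ∀ j, IsMonomialIdeal (I j)) {k : ℕ}
    {a : σ →₀ ℕ} (ha : monomial a (1 : K) ∈ (∑ j, I j) ^ k) :
    ∃ c : ι → ℕ, ∑ j, c j = k ∧ ∃ b : ι → σ →₀ ℕ,
      (∀ j, monomial (b j) (1 : K) ∈ I j ^ c j) ∧ ∑ j, b j ≤ a := by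
  classical
  induction k generalizing a with
  | zero => exact ⟨0, by simp, 0, fun j => by simp, by simp⟩
  | succ k ih =>
    have hJ := sum fun j (_ : j ∈ Finset.univ) => hI j
    rw [pow_succ'] at ha
    obtain ⟨g, h, hg, hh, hle⟩ := hJ.exists_add_le_of_monomial_mem_mul (hJ.pow k) ha
    obtain ⟨j, -, hgj⟩ := exists_monomial_mem_of_mem_sum (fun j _ => hI j) hg
    obtain ⟨c, hc, b, hb, hbh⟩ := ih hh
    refine ⟨c + Pi.single j 1, by simp [Finset.sum_add_distrib, hc],
      b + Pi.single j g, fun i => ?_, ?_⟩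
    · by_cases hij : i = j
      · subst hij
        simp only [Pi.add_apply, Pi.single_eq_same, pow_succ]
        rw [← one_mul (1 : K), ← monomial_mul]
        exact Ideal.mul_mem_mul (hb i) hgj
      · simpa [Pi.single_apply, hij] using hb i
    · calc ∑ i, (b + Pi.single j g : ι → σ →₀ ℕ) i = ∑ i, b i + g := by
            simp [Finset.sum_add_distrib]
        _ ≤ h + g := add_le_add_left hbh g
        _ ≤ a := add_comm g h ▸ hle

theorem sum_pow_ne_top {ι : Type*} {s : Finset ι} {I : ι → Ideal (MvPolynomial σ K)}
    (hI : ∀ j ∈ s, IsMonomialIdeal (I j)) (hI1 : ∀ j ∈ s, I j ≠ ⊤) {k : ℕ}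
    (hk : k ≠ 0) :
    (∑ j ∈ s, I j) ^ k ≠ ⊤ := by
  refine ne_top_of_le_ne_top (fun h => ?_) (Ideal.pow_le_self hk)
  rw [Ideal.eq_top_iff_one, ← C_1, ← monomial_zero'] at h
  obtain ⟨j, hj, hj1⟩ := exists_monomial_mem_of_mem_sum hI h
  rw [monomial_zero', C_1, ← Ideal.eq_top_iff_one] at hj1
  exact hI1 j hj hj1

theorem exists_X_mem_of_le {p : Ideal (MvPolynomial σ K)} (hI : IsMonomialIdeal I)
    (hI0 : I ≠ ⊥) (hp : p.IsPrime) (hIp : I ≤ p) :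
    ∃ i ∈ suppIdeal I, X i ∈ p := by
  obtain ⟨f, hfI, hf0⟩ := Submodule.exists_mem_ne_zero_of_ne_bot hI0
  obtain ⟨a, ha⟩ := Finset.nonempty_iff_ne_empty.mpr (mt MvPolynomial.support_eq_empty.mp hf0)
  obtain ⟨b, hb, -⟩ := exists_mem_minimalMonGens_le (hI.mem_iff.mp hfI a ha)
  obtain ⟨i, hib, hip⟩ := hp.exists_X_mem_of_monomial_mem (hIp hb.1)
  exact ⟨i, support_subset_suppIdeal hb hib, hip⟩

theorem exists_sub_mem_of_notMem (hI : IsMonomialIdeal I) {f : MvPolynomial σ K} (hf : f ∉ I) :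
    ∃ f', f' ≠ 0 ∧ f - f' ∈ I ∧ ∀ m ∈ f'.support, monomial m (1 : K) ∉ I := by
  classical
  let f' := ∑ m ∈ f.support with monomial m (1 : K) ∉ I, monomial m (coeff m f)
  have hcoeff (m : σ →₀ ℕ) :
      coeff m f' = if m ∈ f.support ∧ monomial m (1 : K) ∉ I then coeff m f else 0 := by
    simp only [f', coeff_sum, coeff_monomial, Finset.sum_ite_eq', Finset.mem_filter]
  have hrestI : f - f' ∈ I := by
    refine hI.mem_iff.mpr fun m hm => ?_
    rw [MvPolynomial.mem_support_iff, coeff_sub, hcoeff, sub_ne_zero] at hm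
    by_contra hmI
    by_cases hmf : m ∈ f.support
    · exact hm (if_pos ⟨hmf, hmI⟩).symm
    · exact hm (by rw [if_neg fun h => hmf h.1]; exact MvPolynomial.notMem_support_iff.mp hmf)
  refine ⟨f', fun h0 => hf (by simpa [h0] using hrestI), hrestI, fun m hm hmI => ?_⟩
  rw [MvPolynomial.mem_support_iff, hcoeff] at hm
  simp [hmI] at hm

theorem isPrime_of_monomial_mem_or_mem [Finite σ] (hI : IsMonomialIdeal I) (hI1 : I ≠ ⊤)
    (h : ∀ a b, monomial (a + b) (1 : K) ∈ I →
      monomial a (1 : K) ∈ I ∨ monomial b (1 : K) ∈ I) :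
    I.IsPrime := by
  let _ : LinearOrder σ := LinearOrder.lift' _ (Finite.equivFin σ).injective
  refine ⟨hI1, fun {f g} hfg => ?_⟩
  by_contra! hfg'
  obtain ⟨f', hf'0, hff', hf'I⟩ := hI.exists_sub_mem_of_notMem hfg'.1
  obtain ⟨g', hg'0, hgg', hg'I⟩ := hI.exists_sub_mem_of_notMem hfg'.2
  have hf'g' : f' * g' ∈ I := by
    have : f' * g' = f * g - (f - f') * g - f' * (g - g') := by ring
    exact this ▸ I.sub_mem (I.sub_mem hfg (I.mul_mem_right _ hff')) (I.mul_mem_left _ hgg')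
  -- no monomial of `f'` or `g'` lies in `I`, yet the product of their leading monomials
  -- occurs in `f' * g' ∈ I`
  let o := MonomialOrder.lex (σ := σ)
  have hlead : o.degree f' + o.degree g' ∈ (f' * g').support := by
    rw [MvPolynomial.mem_support_iff, o.coeff_mul_of_degree_add]
    exact mul_ne_zero (o.leadingCoeff_ne_zero_iff.mpr hf'0)
      (o.leadingCoeff_ne_zero_iff.mpr hg'0)
  rcases h _ _ (hI.mem_iff.mp hf'g' _ hlead) with h | h
  · exact hf'I _ (o.degree_mem_support hf'0) h
  · exact hg'I _ (o.degree_mem_support hg'0) h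

theorem exists_monomial_colon_mem_assOf [Finite σ] (hL : IsMonomialIdeal L) (hL1 : L ≠ ⊤) :
    ∃ w : σ →₀ ℕ, L.colon (Ideal.span {monomial w (1 : K)}) ∈ assOf L := by
  obtain ⟨q, ⟨w, hw, rfl⟩, hmax⟩ := set_has_maximal_iff_noetherian.mpr inferInstance
    {q : Ideal (MvPolynomial σ K) | ∃ w : σ →₀ ℕ,
      monomial w (1 : K) ∉ L ∧ q = L.colon (Ideal.span {monomial w (1 : K)})}
    ⟨_, 0, by simpa [Ideal.eq_top_iff_one] using hL1, rfl⟩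
  refine ⟨w, colon_span_singleton_mem_assOf
    ((hL.colon_monomial w).isPrime_of_monomial_mem_or_mem ?_ fun a b hab => ?_)⟩
  · rw [Ne, Ideal.eq_top_iff_one, Ideal.mem_colon_span_singleton, one_mul]
    exact hw
  · by_contra! hne
    simp only [Ideal.mem_colon_span_singleton, monomial_mul, one_mul] at hab hne
    -- `L : x^w ≤ L : x^(b+w)`, so by maximality they are equal, and `x^a` lies in the latter
    have hle : L.colon (Ideal.span {monomial w (1 : K)}) ≤
        L.colon (Ideal.span {monomial (b + w) (1 : K)}) := fun r hr => by
      rw [Ideal.mem_colon_span_singleton] at hr ⊢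
      rw [add_comm, ← one_mul (1 : K), ← monomial_mul, ← mul_assoc]
      exact L.mul_mem_right _ hr
    have heq := hle.eq_of_not_lt (hmax _ ⟨b + w, hne.2, rfl⟩)
    have ha : monomial a (1 : K) ∈ L.colon (Ideal.span {monomial (b + w) (1 : K)}) := by
      rw [Ideal.mem_colon_span_singleton, monomial_mul, one_mul, ← add_assoc]
      exact hab
    rw [← heq, Ideal.mem_colon_span_singleton, monomial_mul, one_mul] at ha
    exact hne.1 ha

theorem exists_isHomogeneous_vnumber [Finite σ] (hL : IsMonomialIdeal L) (hL1 : L ≠ ⊤) :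
    ∃ p ∈ assOf L, ∃ f : MvPolynomial σ K,
      f.IsHomogeneous (vnumber L) ∧ L.colon (Ideal.span {f}) = p := by
  obtain ⟨w, hw⟩ := hL.exists_monomial_colon_mem_assOf hL1
  show sInf _ ∈ {d : ℕ | ∃ p ∈ assOf L, ∃ f : MvPolynomial σ K,
    f.IsHomogeneous d ∧ L.colon (Ideal.span {f}) = p}
  exact Nat.sInf_mem ⟨w.degree, _, hw, _, isHomogeneous_monomial _ rfl, rfl⟩

end IsMonomialIdeal

open Classical in
/-- For a proper monomial ideal the cap `deg e` is no restriction, see `le_powIndex`. -/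
def powIndex (I : Ideal (MvPolynomial σ K)) (e : σ →₀ ℕ) : ℕ :=
  Nat.findGreatest (fun c => monomial e (1 : K) ∈ I ^ c) e.degree

theorem monomial_mem_pow_powIndex (I : Ideal (MvPolynomial σ K)) (e : σ →₀ ℕ) :
    monomial e (1 : K) ∈ I ^ powIndex I e := by
  classical
  exact Nat.findGreatest_spec (P := fun c => monomial e (1 : K) ∈ I ^ c) zero_le (by simp)

theorem IsMonomialIdeal.le_powIndex {I : Ideal (MvPolynomial σ K)} (hI : IsMonomialIdeal I)
    (hI1 : I ≠ ⊤) {c : ℕ} {e : σ →₀ ℕ} (h : monomial e (1 : K) ∈ I ^ c) :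
    c ≤ powIndex I e := by
  classical
  refine Nat.le_findGreatest ?_ h
  simpa using hI.mul_le_degree_of_monomial_mem_pow
    (fun g hg => one_le_degree_of_monomial_mem hI1 hg) h

section DisjointSupports

variable {ι : Type*} [Fintype ι] {I : ι → Ideal (MvPolynomial σ K)}

theorem sum_powIndex_lt (hmon : ∀ j, IsMonomialIdeal (I j))
    (hsupp : Pairwise fun i j => Disjoint (suppIdeal (I i)) (suppIdeal (I j)))
    {k : ℕ} {e : σ →₀ ℕ} (he : monomial e (1 : K) ∉ (∑ j, I j) ^ k) :
    ∑ j, powIndex (I j) e < k := by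
  by_contra! hk
  choose b hbe hbT hbI using fun j =>
    (hmon j).exists_le_support_subset_of_monomial_mem_pow (monomial_mem_pow_powIndex (I j) e)
  refine he (monomial_one_mem_of_le ?_ (Finsupp.sum_le_of_support_subset hsupp hbT hbe))
  refine Ideal.pow_le_pow_right hk ?_
  rw [monomial_sum_one, ← Finset.prod_pow_eq_pow_sum]
  exact Ideal.prod_mem_prod fun j _ =>
    Ideal.pow_right_mono
      (Finset.single_le_sum (f := I) (fun _ _ => bot_le) (Finset.mem_univ j)) _ (hbI j)

theorem exists_le_add_single_of_monomial_mem_sum_pow (hmon : ∀ j, IsMonomialIdeal (I j))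
    (hpr : ∀ j, I j ≠ ⊤)
    (hsupp : Pairwise fun i j => Disjoint (suppIdeal (I i)) (suppIdeal (I j)))
    {k : ℕ} {e : σ →₀ ℕ} {j : ι} {i : σ}
    (hi : i ∈ suppIdeal (I j)) (he : monomial (e + single i 1) (1 : K) ∈ (∑ l, I l) ^ k) :
    ∃ c B, B ≤ e + single i 1 ∧ ↑B.support ⊆ suppIdeal (I j) ∧
      c * alphaDeg (I j) ≤ B.degree ∧ k + powIndex (I j) e ≤ c + ∑ l, powIndex (I l) e := by
  classical
  obtain ⟨c, hc, A, hA, hAle⟩ := IsMonomialIdeal.exists_le_of_monomial_mem_sum_pow hmon he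
  choose B hBA hBT hB using fun l =>
    (hmon l).exists_le_support_subset_of_monomial_mem_pow (hA l)
  have hBle (l : ι) : B l ≤ e + single i 1 :=
    (hBA l).trans ((Finset.single_le_sum (fun l _ => zero_le) (Finset.mem_univ l)).trans hAle)
  -- for `l ≠ j` the variable `x_i` does not occur in `B l`, so `x^(B l)` already divides `x^e`
  have hcm (l : ι) (hl : l ≠ j) : c l ≤ powIndex (I l) e := by
    have hBi : B l i = 0 := Finsupp.notMem_support_iff.mp fun h =>
      Set.disjoint_left.mp (hsupp hl) (hBT l h) hi
    exact (hmon l).le_powIndex (hpr l)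
      (monomial_one_mem_of_le (hB l) (Finsupp.le_of_le_add_single (hBle l) hBi))
  refine ⟨c j, B j, hBle j, hBT j,
    (hmon j).mul_le_degree_of_monomial_mem_pow (fun _ => alphaDeg_le_degree) (hB j), ?_⟩
  have := Finset.sum_le_sum fun l (hl : l ∈ Finset.univ.erase j) =>
    hcm l (Finset.ne_of_mem_erase hl)
  rw [← hc, ← Finset.add_sum_erase _ _ (Finset.mem_univ j),
    ← Finset.add_sum_erase _ (fun l => powIndex (I l) e) (Finset.mem_univ j)]
  omega

theorem mul_add_sum_alphaDeg_le_degree_add_card [Nonempty ι]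
    (hmon : ∀ j, IsMonomialIdeal (I j)) (hnz : ∀ j, I j ≠ ⊥) (hpr : ∀ j, I j ≠ ⊤)
    (hsupp : Pairwise fun i j => Disjoint (suppIdeal (I i)) (suppIdeal (I j)))
    {μ : ℕ} (hμ : ∀ j, μ ≤ alphaDeg (I j)) {k d : ℕ} {p : Ideal (MvPolynomial σ K)}
    {f : MvPolynomial σ K} (hp : p.IsPrime) (hf : f.IsHomogeneous d)
    (hfp : ((∑ j, I j) ^ k).colon (Ideal.span {f}) = p) :
    μ * k + ∑ j, alphaDeg (I j) ≤ d + Fintype.card ι + μ := by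
  classical
  set L := (∑ j, I j) ^ k
  have hL : IsMonomialIdeal L := (IsMonomialIdeal.sum fun j _ => hmon j).pow k
  have hLp : L ≤ p :=
    hfp ▸ fun x hx => Ideal.mem_colon_span_singleton.mpr (L.mul_mem_right f hx)
  have hfL : f ∉ L := fun h => hp.ne_top <| by
    rw [← hfp, Ideal.eq_top_iff_one, Ideal.mem_colon_span_singleton, one_mul]
    exact h
  obtain ⟨e, hef, heL⟩ : ∃ e ∈ f.support, monomial e (1 : K) ∉ L := by
    by_contra! h
    exact hfL (hL.mem_iff.mpr h)
  have hde : e.degree = d := by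
    rw [degree_eq_weight_one]
    exact hf (MvPolynomial.mem_support_iff.mp hef)
  choose i hiT hip using fun j => (hmon j).exists_X_mem_of_le (hnz j) hp
    ((Finset.single_le_sum (f := I) (fun _ _ => bot_le) (Finset.mem_univ j)).trans
      (hp.le_of_pow_le hLp))
  have hXe (j : ι) : monomial (e + single (i j) 1) (1 : K) ∈ L := by
    have hXf : X (i j) * f ∈ L := Ideal.mem_colon_span_singleton.mp (hfp ▸ hip j)
    refine hL.mem_iff.mp hXf _ ?_
    rw [add_comm, MvPolynomial.mem_support_iff, coeff_X_mul]
    exact MvPolynomial.mem_support_iff.mp hef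
  choose c B hBle hBT hcB hck using fun j =>
    exists_le_add_single_of_monomial_mem_sum_pow hmon hpr hsupp (hiT j) (hXe j)
  have hBsum : ∑ j, B j ≤ e + ∑ j, single (i j) 1 :=
    Finsupp.sum_le_of_support_subset hsupp hBT fun j => (hBle j).trans (add_le_add le_rfl
      (Finset.single_le_sum (f := fun l => single (i l) 1) (fun _ _ => zero_le)
        (Finset.mem_univ j)))
  have hdeg : ∑ j, (B j).degree ≤ d + Fintype.card ι := by
    have := degree_mono hBsum
    simp only [map_sum, map_add, hde, degree_single, Finset.sum_const, Finset.card_univ,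
      smul_eq_mul, mul_one] at this
    exact this
  calc μ * k + ∑ j, alphaDeg (I j)
      ≤ ∑ j, c j * alphaDeg (I j) + μ :=
        mul_add_sum_le_sum_mul_add hμ (sum_powIndex_lt hmon hsupp heL) hck
    _ ≤ ∑ j, (B j).degree + μ := by gcongr with j; exact hcB j
    _ ≤ d + Fintype.card ι + μ := by gcongr

end DisjointSupports

theorem stmt9_general {K : Type} [Field K] {n t : ℕ} (ht : 0 < t)
    (I : Fin t → Ideal (MvPolynomial (Fin n) K))
    (hnz : ∀ j, I j ≠ ⊥) (hpr : ∀ j, I j ≠ ⊤) (hmon : ∀ j, IsMonomialIdeal (I j))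
    (hsupp : Pairwise fun i j => Disjoint (suppIdeal (I i)) (suppIdeal (I j))) :
    ∀ k : ℕ, 1 ≤ k →
      ((Finset.univ.inf' ⟨⟨0, ht⟩, Finset.mem_univ _⟩ fun j => alphaDeg (I j) : ℕ) : ℤ) * k +
        ((∑ j, (alphaDeg (I j) : ℤ)) -
          ((Finset.univ.inf' ⟨⟨0, ht⟩, Finset.mem_univ _⟩ fun j => alphaDeg (I j) : ℕ) : ℤ)
          - t) ≤ (vnumber ((∑ j, I j) ^ k) : ℤ) := by
  intro k hk
  have hJ := IsMonomialIdeal.sum fun j (_ : j ∈ Finset.univ) => hmon j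
  obtain ⟨p, hp, f, hf, hfp⟩ := (hJ.pow k).exists_isHomogeneous_vnumber
    (IsMonomialIdeal.sum_pow_ne_top (fun j _ => hmon j) (fun j _ => hpr j) (by omega))
  have : Nonempty (Fin t) := ⟨⟨0, ht⟩⟩
  have hbound := mul_add_sum_alphaDeg_le_degree_add_card hmon hnz hpr hsupp
    (μ := Finset.univ.inf' ⟨⟨0, ht⟩, Finset.mem_univ _⟩ fun j => alphaDeg (I j))
    (fun j => Finset.inf'_le _ (Finset.mem_univ j)) hp.isPrime hf hfp
  rw [Fintype.card_fin] at hbound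
  zify at hbound
  linarith

/-- Theorem 5.2, lower bound: let `I_1,…,I_t` be nonzero proper monomial
ideals with pairwise disjoint supports such that `v(I_j^k) = α(I_j)·k − 1` for all `k ≫ 0`.
Then for every `k ≥ 1`,
`v((I_1+⋯+I_t)^k) ≥ (min_j α(I_j))·k + (∑_j α(I_j) − min_j α(I_j) − t)`. -/
theorem stmt9 {K : Type} [Field K] {n t : ℕ} (ht : 0 < t)
    (I : Fin t → Ideal (MvPolynomial (Fin n) K))
    (hnz : ∀ j, I j ≠ ⊥) (hpr : ∀ j, I j ≠ ⊤) (hmon : ∀ j, IsMonomialIdeal (I j))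
    (hsupp : Pairwise fun i j => Disjoint (suppIdeal (I i)) (suppIdeal (I j)))
    (hv : ∀ j, ∃ kj : ℕ, ∀ k : ℕ, kj ≤ k → vnumber (I j ^ k) = alphaDeg (I j) * k - 1) :
    ∀ k : ℕ, 1 ≤ k →
      ((Finset.univ.inf' ⟨⟨0, ht⟩, Finset.mem_univ _⟩ fun j => alphaDeg (I j) : ℕ) : ℤ) * k +
        ((∑ j, (alphaDeg (I j) : ℤ)) -
          ((Finset.univ.inf' ⟨⟨0, ht⟩, Finset.mem_univ _⟩ fun j => alphaDeg (I j) : ℕ) : ℤ)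
          - t) ≤ (vnumber ((∑ j, I j) ^ k) : ℤ) :=
  stmt9_general ht I hnz hpr hmon hsupp
end
end

section
/- Let u_1,…,u_m ∈ S = K[x_1,…,x_n] be nonconstant monomials with pairwise disjoint supports and let I = (u_1,…,u_m) be the monomial complete intersection they generate. Then for every k ≥ 1, Ass(I^k) = { (x_{v_1},…,x_{v_m}) : x_{v_i} ∈ supp(u_i) for each i = 1,…,m }, i.e., the associated primes of I^k are exactly the prime ideals generated by choosing one variable from the support of each generator u_i. In particular, Ass(I^k) = Ass^∞(I) for all k ≥ 1. -/
open MvPolynomial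

noncomputable section

/-!
Write `u i = x ^ a i` and, for an exponent `w`, let `ord w = ∑ i, mᵢ w`, where `mᵢ w` is the
largest `t` with `u i ^ t ∣ x ^ w`. Because the supports are disjoint, `x ^ w ∈ I ^ k` iff
`k ≤ ord w`, so `I ^ k` is the monomial ideal cut out by `ord`.

If `x ^ c ∉ I ^ k` but `x (v i) * x ^ c ∈ I ^ k` for every `i`, then multiplying by `x (v i)` raises
`mᵢ`, so `mᵢ c` is attained at the coordinate `v i` alone; multiplying by a monomial avoiding all
the `x (v i)` then raises no `mᵢ`, and `(I ^ k : x ^ c) = (x (v 1), …, x (v m))`. The monomial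
`∏ i, u i ^ (d i + 1) / x (v i)` with `∑ i, d i = k - 1` is such an `x ^ c`. Conversely, an
associated prime `(I ^ k : f)` contains every `u i`, hence some `x (v i)`; discarding the terms of
`f` that lie in `I ^ k` reduces the reverse inclusion to the monomial case.
-/

namespace Finsupp

variable {σ : Type*} {a c μ : σ →₀ ℕ} {t : ℕ}

/-- The largest `t` with `t • a ≤ c` (junk value `0` when `a = 0`). -/
def expMultiplicity (a c : σ →₀ ℕ) : ℕ := sSup {t | t • a ≤ c}

theorem le_expMultiplicity_iff (ha : a ≠ 0) : t ≤ expMultiplicity a c ↔ t • a ≤ c := by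
  obtain ⟨j, hj⟩ := Finsupp.ne_iff.mp ha
  have hbdd : BddAbove {t | t • a ≤ c} :=
    ⟨c j, fun t ht => (Nat.le_mul_of_pos_right t (Nat.pos_of_ne_zero hj)).trans (ht j)⟩
  refine ⟨fun h => ?_, fun h => le_csSup hbdd h⟩
  exact (nsmul_le_nsmul_left zero_le h).trans (Nat.sSup_mem ⟨0, by simp⟩ hbdd)

theorem expMultiplicity_nsmul_le (ha : a ≠ 0) : expMultiplicity a c • a ≤ c :=
  (le_expMultiplicity_iff ha).mp le_rfl

theorem expMultiplicity_mono (ha : a ≠ 0) : Monotone (expMultiplicity a) := fun _ _ h =>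
  (le_expMultiplicity_iff ha).mpr ((expMultiplicity_nsmul_le ha).trans h)

theorem expMultiplicity_lt_add_self (ha : a ≠ 0) :
    expMultiplicity a c < expMultiplicity a (a + c) := by
  rw [Nat.lt_iff_add_one_le, le_expMultiplicity_iff ha, succ_nsmul']
  exact add_le_add_right (expMultiplicity_nsmul_le ha) a

theorem expMultiplicity_add_single_of_notMem {j : σ} (ha : a ≠ 0) (hj : j ∉ a.support) :
    expMultiplicity a (c + single j 1) = expMultiplicity a c := by
  refine le_antisymm ((le_expMultiplicity_iff ha).mpr fun i => ?_)
    (expMultiplicity_mono ha le_self_add)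
  rcases eq_or_ne i j with rfl | hij
  · simp [notMem_support_iff.mp hj]
  · have hle := expMultiplicity_nsmul_le ha (c := c + single j 1) i
    simpa [single_eq_of_ne hij] using hle

/-- If multiplying by `x j` raises the multiplicity, the bound is attained at `j` alone. -/
theorem expMultiplicity_add_le_of_lt {j : σ} (ha : a ≠ 0)
    (hj : expMultiplicity a c < expMultiplicity a (c + single j 1)) (hμ : μ j = 0) :
    expMultiplicity a (μ + c) ≤ expMultiplicity a c := by
  by_contra! h
  rw [Nat.lt_iff_add_one_le, le_expMultiplicity_iff ha] at h hj
  suffices (expMultiplicity a c + 1) • a ≤ c by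
    simpa using (le_expMultiplicity_iff ha).mpr this
  intro i
  rcases eq_or_ne i j with rfl | hij
  · simpa [hμ] using h i
  · simpa [single_eq_of_ne hij] using hj i

theorem sum_nsmul_le_of_pairwise_disjoint {ι : Type*} [Fintype ι] {a : ι → σ →₀ ℕ}
    (hdisj : Pairwise fun i j => Disjoint (a i).support (a j).support) {t : ι → ℕ}
    (h : ∀ i, t i • a i ≤ c) : ∑ i, t i • a i ≤ c := by
  intro j
  simp only [coe_finsetSum, Finset.sum_apply, coe_smul, Pi.smul_apply, smul_eq_mul]
  by_cases hj : ∃ i, j ∈ (a i).support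
  · obtain ⟨i, hi⟩ := hj
    rw [Finset.sum_eq_single i (fun l _ hl => by
      rw [notMem_support_iff.mp (Finset.disjoint_right.mp (hdisj hl) hi), mul_zero]) (by simp)]
    simpa using h i j
  · push Not at hj
    simp [notMem_support_iff.mp (hj _)]

end Finsupp

open Finsupp

section PowOrder

variable {σ ι R : Type*} [Fintype ι] [CommSemiring R] {a : ι → σ →₀ ℕ} {w w' : σ →₀ ℕ} {k : ℕ}

variable (R a) in
abbrev spanMonomials : Ideal (MvPolynomial σ R) :=
  Ideal.span (Set.range fun i => monomial (a i) (1 : R))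

variable (a) in
/-- For disjoint supports, the largest `k` with `x ^ w ∈ spanMonomials R a ^ k`
(`monomial_mem_pow_spanMonomials_iff`). -/
def powOrder (w : σ →₀ ℕ) : ℕ := ∑ i, expMultiplicity (a i) w

theorem powOrder_mono (ha : ∀ i, a i ≠ 0) : Monotone (powOrder a) := fun _ _ h =>
  Finset.sum_le_sum fun i _ => expMultiplicity_mono (ha i) h

theorem powOrder_lt_of_le_of_lt (ha : ∀ i, a i ≠ 0) (h : w ≤ w') {i : ι}
    (hi : expMultiplicity (a i) w < expMultiplicity (a i) w') : powOrder a w < powOrder a w' :=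
  Finset.sum_lt_sum (fun l _ => expMultiplicity_mono (ha l) h) ⟨i, Finset.mem_univ i, hi⟩

theorem monomial_mem_pow_spanMonomials_of_le_powOrder (ha : ∀ i, a i ≠ 0)
    (hdisj : Pairwise fun i j => Disjoint (a i).support (a j).support) (hk : k ≤ powOrder a w) :
    monomial w (1 : R) ∈ spanMonomials R a ^ k := by
  set t := fun i => expMultiplicity (a i) w
  have hle : ∑ i, t i • a i ≤ w :=
    sum_nsmul_le_of_pairwise_disjoint hdisj fun i => expMultiplicity_nsmul_le (ha i)
  have hprod : ∏ i, monomial (a i) (1 : R) ^ t i = monomial (∑ i, t i • a i) 1 := by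
    simp [monomial_pow, monomial_sum_one]
  have hsplit : monomial w (1 : R) =
      monomial (w - ∑ i, t i • a i) 1 * ∏ i, monomial (a i) (1 : R) ^ t i := by
    rw [hprod, monomial_mul, one_mul, tsub_add_cancel_of_le hle]
  rw [hsplit]
  refine Ideal.mul_mem_left _ _ (Ideal.pow_le_pow_right hk ?_)
  rw [powOrder, ← Finset.prod_pow_eq_pow_sum]
  exact Ideal.prod_mem_prod fun i _ =>
    Ideal.pow_mem_pow (Ideal.subset_span (Set.mem_range_self i)) _

theorem pow_spanMonomials_le (ha : ∀ i, a i ≠ 0) (k : ℕ) :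
    spanMonomials R a ^ k ≤
      Ideal.span ((fun w => monomial w (1 : R)) '' {w | k ≤ powOrder a w}) := by
  induction k with
  | zero =>
    rw [pow_zero, Ideal.one_eq_top, top_le_iff, Ideal.eq_top_iff_one]
    exact Ideal.subset_span ⟨0, Nat.zero_le _, one_def.symm⟩
  | succ k ih =>
    rw [pow_succ']
    refine (Ideal.mul_mono_right ih).trans ?_
    rw [Ideal.span_mul_span', Ideal.span_le]
    rintro _ ⟨_, ⟨i, rfl⟩, _, ⟨w, hw, rfl⟩, rfl⟩
    refine Ideal.subset_span ⟨a i + w, ?_, by simp [monomial_mul]⟩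
    exact Nat.lt_iff_add_one_le.mp (hw.trans_lt
      (powOrder_lt_of_le_of_lt ha le_add_self (expMultiplicity_lt_add_self (ha i))))

theorem pow_spanMonomials_eq (ha : ∀ i, a i ≠ 0)
    (hdisj : Pairwise fun i j => Disjoint (a i).support (a j).support) (k : ℕ) :
    spanMonomials R a ^ k = Ideal.span ((fun w => monomial w (1 : R)) '' {w | k ≤ powOrder a w}) :=
  (pow_spanMonomials_le ha k).antisymm <| Ideal.span_le.mpr <| by
    rintro _ ⟨w, hw, rfl⟩
    exact monomial_mem_pow_spanMonomials_of_le_powOrder ha hdisj hw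

theorem mem_pow_spanMonomials_iff (ha : ∀ i, a i ≠ 0)
    (hdisj : Pairwise fun i j => Disjoint (a i).support (a j).support) {f : MvPolynomial σ R} :
    f ∈ spanMonomials R a ^ k ↔ ∀ w ∈ f.support, k ≤ powOrder a w := by
  rw [pow_spanMonomials_eq ha hdisj, mem_ideal_span_monomial_image]
  exact forall₂_congr fun w _ =>
    ⟨fun ⟨u, hu, huw⟩ => hu.trans (powOrder_mono ha huw), fun hw => ⟨w, hw, le_rfl⟩⟩

theorem monomial_mem_pow_spanMonomials_iff [Nontrivial R] (ha : ∀ i, a i ≠ 0)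
    (hdisj : Pairwise fun i j => Disjoint (a i).support (a j).support) :
    monomial w (1 : R) ∈ spanMonomials R a ^ k ↔ k ≤ powOrder a w := by
  classical
  rw [mem_pow_spanMonomials_iff ha hdisj, support_monomial, if_neg one_ne_zero]
  simp

theorem powOrder_add_lt (ha : ∀ i, a i ≠ 0)
    (hdisj : Pairwise fun i j => Disjoint (a i).support (a j).support)
    {v : ι → σ} (hv : ∀ i, v i ∈ (a i).support) {c μ : σ →₀ ℕ}
    (hc : powOrder a c < k) (hcv : ∀ i, k ≤ powOrder a (c + single (v i) 1))
    (hμ : ∀ i, μ (v i) = 0) : powOrder a (μ + c) < k := by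
  have hinc : ∀ i, expMultiplicity (a i) c < expMultiplicity (a i) (c + single (v i) 1) := by
    intro i
    by_contra! h
    have : powOrder a (c + single (v i) 1) ≤ powOrder a c := Finset.sum_le_sum fun l _ => by
      rcases eq_or_ne l i with rfl | hli
      · exact h
      · rw [expMultiplicity_add_single_of_notMem (ha l)
          (Finset.disjoint_right.mp (hdisj hli) (hv i))]
    exact (hcv i).not_gt (this.trans_lt hc)
  calc powOrder a (μ + c) ≤ powOrder a c :=
        Finset.sum_le_sum fun i _ => expMultiplicity_add_le_of_lt (ha i) (hinc i) (hμ i)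
    _ < k := hc

variable (a) in
def colonWitness (v : ι → σ) (d : ι → ℕ) : σ →₀ ℕ :=
  ∑ i, ((d i + 1) • a i - single (v i) 1)

section colonWitness

variable {v : ι → σ} {d : ι → ℕ}

theorem nsmul_sub_single_le_colonWitness (i : ι) :
    (d i + 1) • a i - single (v i) 1 ≤ colonWitness a v d :=
  Finset.single_le_sum (f := fun i => (d i + 1) • a i - single (v i) 1)
    (fun _ _ => zero_le) (Finset.mem_univ i)

theorem colonWitness_apply (hdisj : Pairwise fun i j => Disjoint (a i).support (a j).support)
    (hv : ∀ i, v i ∈ (a i).support) (l : ι) :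
    colonWitness a v d (v l) = (d l + 1) * a l (v l) - 1 := by
  rw [colonWitness, Finset.sum_apply', Finset.sum_eq_single l]
  · simp
  · intro i _ hil
    simp [notMem_support_iff.mp (Finset.disjoint_right.mp (hdisj hil) (hv l))]
  · simp

theorem expMultiplicity_colonWitness (ha : ∀ i, a i ≠ 0)
    (hdisj : Pairwise fun i j => Disjoint (a i).support (a j).support)
    (hv : ∀ i, v i ∈ (a i).support) (l : ι) :
    expMultiplicity (a l) (colonWitness a v d) = d l := by
  have hvl : 1 ≤ a l (v l) := Nat.one_le_iff_ne_zero.mpr (mem_support_iff.mp (hv l))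
  refine le_antisymm (Nat.lt_add_one_iff.mp ?_) ((le_expMultiplicity_iff (ha l)).mpr ?_)
  · by_contra! h
    have hpos : 0 < (d l + 1) * a l (v l) := Nat.mul_pos (Nat.succ_pos _) hvl
    have h1 := (le_expMultiplicity_iff (ha l)).mp h (v l)
    rw [colonWitness_apply hdisj hv, Finsupp.smul_apply, smul_eq_mul] at h1
    omega
  · refine le_trans (le_tsub_of_add_le_left ?_) (nsmul_sub_single_le_colonWitness l)
    rw [succ_nsmul']
    exact add_le_add (single_le_iff.mpr hvl) le_rfl

theorem lt_expMultiplicity_colonWitness_add (ha : ∀ i, a i ≠ 0) (l : ι) :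
    d l < expMultiplicity (a l) (colonWitness a v d + single (v l) 1) := by
  rw [Nat.lt_iff_add_one_le, le_expMultiplicity_iff (ha l)]
  exact le_tsub_add.trans (add_le_add (nsmul_sub_single_le_colonWitness l) le_rfl)

theorem powOrder_colonWitness (ha : ∀ i, a i ≠ 0)
    (hdisj : Pairwise fun i j => Disjoint (a i).support (a j).support)
    (hv : ∀ i, v i ∈ (a i).support) : powOrder a (colonWitness a v d) = ∑ i, d i :=
  Finset.sum_congr rfl fun l _ => expMultiplicity_colonWitness ha hdisj hv l

theorem powOrder_colonWitness_lt_add (ha : ∀ i, a i ≠ 0)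
    (hdisj : Pairwise fun i j => Disjoint (a i).support (a j).support)
    (hv : ∀ i, v i ∈ (a i).support) (l : ι) :
    powOrder a (colonWitness a v d) < powOrder a (colonWitness a v d + single (v l) 1) :=
  powOrder_lt_of_le_of_lt ha le_self_add <| by
    simpa only [expMultiplicity_colonWitness ha hdisj hv] using
      lt_expMultiplicity_colonWitness_add ha l

end colonWitness

theorem exists_powOrder_lt_le_add_single [Nonempty ι] (ha : ∀ i, a i ≠ 0)
    (hdisj : Pairwise fun i j => Disjoint (a i).support (a j).support)
    {v : ι → σ} (hv : ∀ i, v i ∈ (a i).support) (hk : 1 ≤ k) :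
    ∃ c, powOrder a c < k ∧ ∀ i, k ≤ powOrder a (c + single (v i) 1) := by
  classical
  obtain ⟨i₀⟩ := ‹Nonempty ι›
  have hc : powOrder a (colonWitness a v (Pi.single i₀ (k - 1))) = k - 1 := by
    simp [powOrder_colonWitness ha hdisj hv, Finset.sum_pi_single']
  refine ⟨colonWitness a v (Pi.single i₀ (k - 1)), by omega, fun i => ?_⟩
  have := powOrder_colonWitness_lt_add ha hdisj hv (d := Pi.single i₀ (k - 1)) i
  omega

end PowOrder

namespace Ideal

variable {A : Type*} [CommRing A] {J : Ideal A} {f g : A}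

theorem mul_mem_of_mem_span {S : Set A} (hS : ∀ s ∈ S, s * f ∈ J) (hg : g ∈ span S) :
    g * f ∈ J :=
  Submodule.mem_colon_singleton.mp <|
    span_le.mpr (fun s hs => Submodule.mem_colon_singleton.mpr (hS s hs)) hg

theorem mem_colon_bot_mk_iff :
    g ∈ (⊥ : Submodule A (A ⧸ J)).colon {Quotient.mk J f} ↔ g * f ∈ J := by
  rw [Submodule.mem_colon_singleton, Submodule.mem_bot, ← Quotient.eq_zero_iff_mem]
  rfl

end Ideal

namespace MvPolynomial

variable {σ R : Type*} [CommRing R]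

theorem isPrime_span_X_image [IsDomain R] (s : Set σ) :
    (Ideal.span (X '' s : Set (MvPolynomial σ R))).IsPrime := by
  classical
  set P := Ideal.span (X '' s : Set (MvPolynomial σ R))
  let φ : σ → MvPolynomial σ R := fun j => if j ∈ s then 0 else X j
  have hφ : (Ideal.Quotient.mkₐ R P).comp (aeval φ) = Ideal.Quotient.mkₐ R P :=
    algHom_ext fun j => by
      by_cases hj : j ∈ s
      · have : X j ∈ P := Ideal.subset_span ⟨j, hj, rfl⟩
        simpa [φ, hj, eq_comm (a := (0 : _ ⧸ P)), Ideal.Quotient.eq_zero_iff_mem] using this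
      · simp [φ, hj]
  suffices P = RingHom.ker (aeval φ) from this ▸ RingHom.ker_isPrime _
  refine le_antisymm (Ideal.span_le.mpr ?_) fun f hf => ?_
  · rintro _ ⟨j, hj, rfl⟩
    simp [φ, hj]
  · rw [← Ideal.Quotient.eq_zero_iff_mem, ← Ideal.Quotient.mkₐ_eq_mk R, ← hφ, AlgHom.comp_apply,
      RingHom.mem_ker.mp hf, map_zero]

theorem exists_X_mem_of_monomial_mem {p : Ideal (MvPolynomial σ R)} (hp : p.IsPrime)
    {a : σ →₀ ℕ} (h : monomial a (1 : R) ∈ p) : ∃ j ∈ a.support, X j ∈ p := by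
  rw [monomial_eq, C_1, one_mul, Finsupp.prod] at h
  obtain ⟨j, hj, hjp⟩ := hp.prod_mem_iff.mp h
  exact ⟨j, hj, hp.mem_of_pow_mem _ hjp⟩

section restrictMonomials

variable (p : (σ →₀ ℕ) → Prop) [DecidablePred p]

def restrictMonomials (f : MvPolynomial σ R) : MvPolynomial σ R :=
  ∑ m ∈ f.support with p m, monomial m (coeff m f)

theorem coeff_restrictMonomials (f : MvPolynomial σ R) (m : σ →₀ ℕ) :
    coeff m (restrictMonomials p f) = if p m then coeff m f else 0 := by
  classical
  rw [restrictMonomials, coeff_sum]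
  simp_rw [coeff_monomial]
  rw [Finset.sum_ite_eq']
  by_cases hm : p m <;> by_cases hf : coeff m f = 0 <;> simp [hm, hf]

variable {p} in
theorem mem_support_restrictMonomials {f : MvPolynomial σ R} {m : σ →₀ ℕ} :
    m ∈ (restrictMonomials p f).support ↔ m ∈ f.support ∧ p m := by
  simp only [mem_support_iff, coeff_restrictMonomials]
  by_cases hm : p m <;> simp [hm]

variable {p} in
theorem restrictMonomials_ne_zero {f : MvPolynomial σ R} {m : σ →₀ ℕ} (hm : m ∈ f.support)
    (hpm : p m) : restrictMonomials p f ≠ 0 :=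
  ne_zero_iff.mpr ⟨m, mem_support_iff.mp (mem_support_restrictMonomials.mpr ⟨hm, hpm⟩)⟩

theorem sub_restrictMonomials (f : MvPolynomial σ R) :
    f - restrictMonomials p f = restrictMonomials (fun m => ¬ p m) f := by
  ext m
  simp only [coeff_sub, coeff_restrictMonomials]
  by_cases hm : p m <;> simp [hm]

end restrictMonomials

/-- `J` is the monomial ideal whose monomials are those satisfying `T`, and `hT` is the case of
a monomial `f`. -/
theorem mem_span_X_image_of_mul_mem [IsDomain R] {J : Ideal (MvPolynomial σ R)}
    {T : (σ →₀ ℕ) → Prop} (hJ : ∀ f, f ∈ J ↔ ∀ m ∈ f.support, T m) {s : Set σ}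
    (hT : ∀ c μ, ¬ T c → (∀ j ∈ s, T (c + single j 1)) → (∀ j ∈ s, μ j = 0) → ¬ T (μ + c))
    {f g : MvPolynomial σ R} (hf : f ∉ J) (hXf : ∀ j ∈ s, X j * f ∈ J) (hgf : g * f ∈ J) :
    g ∈ Ideal.span (X '' s) := by
  classical
  by_contra hg
  set g₀ := restrictMonomials (fun μ => ∀ j ∈ s, μ j = 0) g
  set f₀ := restrictMonomials (fun m => ¬ T m) f
  have hgg₀ : g - g₀ ∈ Ideal.span (X '' s) := by
    rw [sub_restrictMonomials, mem_ideal_span_X_image]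
    intro m hm
    simpa using (mem_support_restrictMonomials.mp hm).2
  have hff₀ : f - f₀ ∈ J := by
    rw [sub_restrictMonomials, hJ]
    exact fun m hm => not_not.mp (mem_support_restrictMonomials.mp hm).2
  have hg₀ : g₀ ≠ 0 := by
    rw [mem_ideal_span_X_image] at hg
    push Not at hg
    obtain ⟨μ, hμ, hμs⟩ := hg
    exact restrictMonomials_ne_zero hμ hμs
  have hf₀ : f₀ ≠ 0 := by
    rw [hJ] at hf
    push Not at hf
    obtain ⟨m, hm, hmT⟩ := hf
    exact restrictMonomials_ne_zero hm hmT
  have hPf : (g - g₀) * f ∈ J :=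
    Ideal.mul_mem_of_mem_span (by rintro _ ⟨j, hj, rfl⟩; exact hXf j hj) hgg₀
  have hJg₀f₀ : g₀ * f₀ ∈ J := by
    rw [show g₀ * f₀ = g * f - (g - g₀) * f - g₀ * (f - f₀) by ring]
    exact J.sub_mem (J.sub_mem hgf hPf) (J.mul_mem_left _ hff₀)
  have hXf₀ : ∀ j ∈ s, X j * f₀ ∈ J := fun j hj => by
    rw [show X j * f₀ = X j * f - X j * (f - f₀) by ring]
    exact J.sub_mem (hXf j hj) (J.mul_mem_left _ hff₀)
  obtain ⟨u, hu⟩ := support_nonempty.mpr (mul_ne_zero hg₀ hf₀)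
  obtain ⟨μ, hμ, c, hc, rfl⟩ := Finset.mem_add.mp (support_mul g₀ f₀ hu)
  refine hT c μ (mem_support_restrictMonomials.mp hc).2 (fun j hj => ?_)
    (mem_support_restrictMonomials.mp hμ).2 ((hJ _).mp hJg₀f₀ _ hu)
  refine (hJ _).mp (hXf₀ j hj) _ ?_
  rw [mem_support_iff, add_comm, coeff_X_mul]
  exact mem_support_iff.mp hc

end MvPolynomial

section AssociatedPrimes

variable {σ ι R : Type*} [Fintype ι] [CommRing R] [IsDomain R] {a : ι → σ →₀ ℕ} {k : ℕ}

theorem mem_span_X_of_mul_mem_pow_spanMonomials (ha : ∀ i, a i ≠ 0)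
    (hdisj : Pairwise fun i j => Disjoint (a i).support (a j).support)
    {v : ι → σ} (hv : ∀ i, v i ∈ (a i).support) {f g : MvPolynomial σ R}
    (hf : f ∉ spanMonomials R a ^ k) (hXf : ∀ i, X (v i) * f ∈ spanMonomials R a ^ k)
    (hgf : g * f ∈ spanMonomials R a ^ k) :
    g ∈ Ideal.span (Set.range fun i => (X (v i) : MvPolynomial σ R)) := by
  rw [Set.range_comp']
  refine mem_span_X_image_of_mul_mem (fun _ => mem_pow_spanMonomials_iff ha hdisj)
    (fun c μ hc hcv hμ => ?_) hf (by simpa using hXf) hgf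
  exact (powOrder_add_lt ha hdisj hv (not_le.mp hc) (fun i => hcv _ ⟨i, rfl⟩)
    (fun i => hμ _ ⟨i, rfl⟩)).not_ge

theorem isAssociatedPrime_span_X [Nonempty ι] (ha : ∀ i, a i ≠ 0)
    (hdisj : Pairwise fun i j => Disjoint (a i).support (a j).support)
    {v : ι → σ} (hv : ∀ i, v i ∈ (a i).support) (hk : 1 ≤ k) :
    IsAssociatedPrime (Ideal.span (Set.range fun i => (X (v i) : MvPolynomial σ R)))
      (MvPolynomial σ R ⧸ spanMonomials R a ^ k) := by
  obtain ⟨c, hc, hcv⟩ := exists_powOrder_lt_le_add_single ha hdisj hv hk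
  have hXc : ∀ i, X (v i) * monomial c (1 : R) ∈ spanMonomials R a ^ k := fun i => by
    rw [X, monomial_mul, one_mul, add_comm, monomial_mem_pow_spanMonomials_iff ha hdisj]
    exact hcv i
  have hcolon : (⊥ : Submodule (MvPolynomial σ R) (MvPolynomial σ R ⧸ spanMonomials R a ^ k)).colon
      {Ideal.Quotient.mk _ (monomial c 1)} = Ideal.span (Set.range fun i => X (v i)) := by
    ext g
    rw [Ideal.mem_colon_bot_mk_iff]
    refine ⟨mem_span_X_of_mul_mem_pow_spanMonomials ha hdisj hv ?_ hXc, fun hg => ?_⟩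
    · exact (monomial_mem_pow_spanMonomials_iff ha hdisj).not.mpr hc.not_ge
    · exact Ideal.mul_mem_of_mem_span (by rintro _ ⟨i, rfl⟩; exact hXc i) hg
  have hP : (Ideal.span (Set.range fun i => (X (v i) : MvPolynomial σ R))).IsPrime := by
    rw [Set.range_comp']
    exact isPrime_span_X_image _
  exact ⟨hP, _, by rw [hcolon, hP.radical]⟩

theorem eq_span_X_of_isAssociatedPrime [Finite σ] [IsNoetherianRing R] (ha : ∀ i, a i ≠ 0)
    (hdisj : Pairwise fun i j => Disjoint (a i).support (a j).support)
    {p : Ideal (MvPolynomial σ R)}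
    (hp : IsAssociatedPrime p (MvPolynomial σ R ⧸ spanMonomials R a ^ k)) :
    ∃ v : ι → σ, (∀ i, v i ∈ (a i).support) ∧
      p = Ideal.span (Set.range fun i => (X (v i) : MvPolynomial σ R)) := by
  obtain ⟨hprime, x, rfl⟩ := isAssociatedPrime_iff.mp hp
  obtain ⟨f, rfl⟩ := Ideal.Quotient.mk_surjective x
  have hf : f ∉ spanMonomials R a ^ k := fun h =>
    hprime.ne_top <| (Ideal.eq_top_iff_one _).mpr <| Ideal.mem_colon_bot_mk_iff.mpr <| by
      rwa [one_mul]
  have hX : ∀ i, ∃ j ∈ (a i).support, X j ∈ (⊥ : Submodule _ _).colon {Ideal.Quotient.mk _ f} :=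
    fun i => exists_X_mem_of_monomial_mem hprime <| hprime.mem_of_pow_mem k <|
      Ideal.mem_colon_bot_mk_iff.mpr <| Ideal.mul_mem_right _ _ <|
        Ideal.pow_mem_pow (Ideal.subset_span (Set.mem_range_self i)) k
  choose v hv hXv using hX
  refine ⟨v, hv, le_antisymm (fun g hg => ?_) (Ideal.span_le.mpr (Set.range_subset_iff.mpr hXv))⟩
  exact mem_span_X_of_mul_mem_pow_spanMonomials ha hdisj hv hf
    (fun i => Ideal.mem_colon_bot_mk_iff.mp (hXv i)) (Ideal.mem_colon_bot_mk_iff.mp hg)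

theorem associatedPrimes_pow_spanMonomials [Finite σ] [IsNoetherianRing R] [Nonempty ι]
    (ha : ∀ i, a i ≠ 0) (hdisj : Pairwise fun i j => Disjoint (a i).support (a j).support)
    (hk : 1 ≤ k) :
    associatedPrimes (MvPolynomial σ R) (MvPolynomial σ R ⧸ spanMonomials R a ^ k) =
      {P | ∃ v : ι → σ, (∀ i, v i ∈ (a i).support) ∧
        P = Ideal.span (Set.range fun i => (X (v i) : MvPolynomial σ R))} :=
  Set.ext fun _ => ⟨eq_span_X_of_isAssociatedPrime ha hdisj, by
    rintro ⟨v, hv, rfl⟩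
    exact isAssociatedPrime_span_X ha hdisj hv hk⟩

end AssociatedPrimes

/-- Corollary 5.6(a),(b): let `u_1,…,u_m` be nonconstant monomials with
pairwise disjoint supports and `I = (u_1,…,u_m)` the monomial complete intersection they
generate.  Then for every `k ≥ 1` the associated primes of `I^k` are exactly the primes
generated by one variable from the support of each `u_i`; in particular
`Ass(I^k) = Ass^∞(I)` for all `k ≥ 1`. -/
theorem stmt13 {K : Type} [Field K] {n m : ℕ} (hm : 1 ≤ m)
    (a : Fin m → (Fin n →₀ ℕ)) (hne : ∀ i, a i ≠ 0)
    (hdisj : Pairwise fun i j => Disjoint (a i).support (a j).support)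
    (I : Ideal (MvPolynomial (Fin n) K))
    (hI : I = Ideal.span (Set.range fun i => (monomial (a i) (1 : K)))) :
    (∀ k : ℕ, 1 ≤ k → assOf (I ^ k) =
      {P | ∃ v : Fin m → Fin n, (∀ i, v i ∈ (a i).support) ∧
        P = Ideal.span (Set.range fun i => (X (v i) : MvPolynomial (Fin n) K))}) ∧
    (∀ k l : ℕ, 1 ≤ k → 1 ≤ l → assOf (I ^ k) = assOf (I ^ l)) := by
  subst hI
  have : Nonempty (Fin m) := ⟨⟨0, hm⟩⟩
  have hAss := fun k (hk : 1 ≤ k) => associatedPrimes_pow_spanMonomials (R := K) hne hdisj hk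
  exact ⟨hAss, fun k l hk hl => (hAss k hk).trans (hAss l hl).symm⟩
end
end

section
/- Let f ∈ S = K[x_1,…,x_n] be a nonzero homogeneous polynomial of positive degree with factorization f = f_1^{a_1} ⋯ f_s^{a_s} into pairwise non-associated homogeneous irreducible polynomials f_1,…,f_s (a_i ≥ 1), ordered so that deg f_1 ≤ ⋯ ≤ deg f_s, and let I = (f) be the principal ideal it generates. Then for every k ≥ 1, Ass(I^k) = { (f_1),…,(f_s) } and v(I^k) = k·deg(f) − deg(f_s) = α(I)·k − deg(f_s). -/
open MvPolynomial

noncomputable section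

/-! Since the `g i` are prime, `(f)^k = (∏ g i ^ (e i * k))`. An associated prime of a principal
ideal `(h)` is a prime colon ideal `(h : x)`; it contains `h`, hence a prime factor `π` of `h`, and
cancelling common factors forces `(h : x) = (π)`. Conversely `(π) = (h : h / π)`. A homogeneous `w`
with `(f^k : w) = (g i)` satisfies `f^k ∣ g i * w`, so `deg w ≥ k deg f - deg g i`, with equality
for `w = f^k / g i`; the minimum over `i` is reached at the factor of largest degree. -/

namespace Ideal

variable {A : Type*} [CommRing A]

theorem bot_colon_quotient_mk (L : Ideal A) (x : A) :
    (⊥ : Submodule A (A ⧸ L)).colon {Ideal.Quotient.mk L x} = L.colon (span {x}) := by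
  ext y
  rw [Submodule.mem_colon_singleton, Submodule.mem_bot, mem_colon_span_singleton,
    ← Quotient.eq_zero_iff_mem, map_mul]
  rfl

theorem colon_span_singleton_of_not_dvd {π y : A} (hπ : Prime π) (hy : ¬ π ∣ y) :
    (span {π}).colon (span {y}) = span {π} := by
  ext z
  rw [mem_colon_span_singleton, mem_span_singleton, mem_span_singleton]
  exact ⟨fun h => (hπ.dvd_or_dvd h).resolve_right hy, fun h => dvd_mul_of_dvd_left h y⟩

variable [IsDomain A]

theorem colon_span_singleton_mul_cancel (a b : A) {c : A} (hc : c ≠ 0) :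
    (span {a * c}).colon (span {b * c}) = (span {a}).colon (span {b}) := by
  ext y
  simp only [mem_colon_span_singleton, mem_span_singleton, ← mul_assoc,
    mul_dvd_mul_iff_right hc]

theorem colon_span_singleton_mul_self (a : A) {c : A} (hc : c ≠ 0) :
    (span {a * c}).colon (span {c}) = span {a} := by
  ext y
  rw [mem_colon_span_singleton, mem_span_singleton, mem_span_singleton,
    mul_dvd_mul_iff_right hc]

end Ideal

section AssociatedPrimes

open Ideal

variable {A : Type} [CommRing A]

theorem mem_assOf_iff [IsNoetherianRing A] {L p : Ideal A} :
    p ∈ assOf L ↔ p.IsPrime ∧ ∃ x : A, p = L.colon (span {x}) := by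
  rw [assOf, AssociatedPrimes.mem_iff, isAssociatedPrime_iff, Ideal.Quotient.mk_surjective.exists]
  simp only [bot_colon_quotient_mk]

variable [IsDomain A] [IsNoetherianRing A]

theorem eq_span_of_mem_assOf_of_prime_dvd {h π : A} {p : Ideal A} (hh : h ≠ 0)
    (hp : p ∈ assOf (span {h})) (hπ : Prime π) (hπh : π ∣ h) (hπp : π ∈ p) :
    p = span {π} := by
  obtain ⟨hprime, x, rfl⟩ := mem_assOf_iff.mp hp
  obtain ⟨q, rfl⟩ := hπh
  have hq : q ≠ 0 := right_ne_zero_of_mul hh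
  obtain ⟨y, rfl⟩ : q ∣ x := by
    rw [mem_colon_span_singleton, mem_span_singleton] at hπp
    exact (mul_dvd_mul_iff_left hπ.ne_zero).mp hπp
  rw [mul_comm q y, colon_span_singleton_mul_cancel _ _ hq] at hprime ⊢
  refine colon_span_singleton_of_not_dvd hπ fun hy => hprime.ne_top ?_
  rw [eq_top_iff_one, mem_colon_span_singleton, one_mul]
  exact mem_span_singleton.mpr hy

theorem assOf_span_prod_pow {ι : Type*} [Fintype ι] (g : ι → A) (c : ι → ℕ)
    (hg : ∀ i, Prime (g i)) (hc : ∀ i, 1 ≤ c i) :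
    assOf (span {∏ i, g i ^ c i}) = Set.range fun i => span {g i} := by
  have hh : ∏ i, g i ^ c i ≠ 0 :=
    Finset.prod_ne_zero_iff.mpr fun i _ => pow_ne_zero _ (hg i).ne_zero
  have hdvd (i : ι) : g i ∣ ∏ i, g i ^ c i :=
    (dvd_pow_self _ (Nat.one_le_iff_ne_zero.mp (hc i))).trans (Finset.dvd_prod_of_mem _ (Finset.mem_univ i))
  ext p
  constructor
  · intro hp
    obtain ⟨hprime, x, hpx⟩ := mem_assOf_iff.mp hp
    have hmem : ∏ i, g i ^ c i ∈ p := hpx ▸ le_colon (mem_span_singleton_self _)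
    obtain ⟨i, -, hi⟩ := hprime.prod_mem_iff.mp hmem
    exact ⟨i, (eq_span_of_mem_assOf_of_prime_dvd hh hp (hg i) (hdvd i)
      (hprime.mem_of_pow_mem _ hi)).symm⟩
  · rintro ⟨i, rfl⟩
    obtain ⟨q, hq⟩ := hdvd i
    refine mem_assOf_iff.mpr ⟨(span_singleton_prime (hg i).ne_zero).mpr (hg i), q, ?_⟩
    rw [hq, colon_span_singleton_mul_self _ (right_ne_zero_of_mul (hq ▸ hh))]

end AssociatedPrimes

namespace MvPolynomial

variable {σ R : Type*}

theorem homogeneousComponent_mul_of_isHomogeneous_left [CommSemiring R]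
    {φ : MvPolynomial σ R} {m : ℕ} (hφ : φ.IsHomogeneous m) (ψ : MvPolynomial σ R) (t : ℕ) :
    homogeneousComponent (m + t) (φ * ψ) = φ * homogeneousComponent t ψ := by
  conv_lhs => rw [← sum_homogeneousComponent ψ, Finset.mul_sum, map_sum]
  have hterm (j : ℕ) : homogeneousComponent (m + t) (φ * homogeneousComponent j ψ) =
      if t = j then φ * homogeneousComponent j ψ else 0 := by
    rw [homogeneousComponent_of_mem
      (hφ.mul (homogeneousComponent_isHomogeneous j ψ))]
    simp only [add_right_inj]
  simp only [hterm, Finset.sum_ite_eq, Finset.mem_range]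
  split_ifs with ht
  · rfl
  · rw [homogeneousComponent_eq_zero _ _ (by omega), mul_zero]

variable [CommRing R] [IsDomain R]

theorem IsHomogeneous.of_mul_left {φ ψ : MvPolynomial σ R} {m n : ℕ}
    (hφ : φ.IsHomogeneous m) (hφ0 : φ ≠ 0) (h : (φ * ψ).IsHomogeneous n) :
    ψ.IsHomogeneous (n - m) := by
  intro u hu
  change (Finsupp.weight fun _ => 1) u = n - m
  rw [← Finsupp.degree_eq_weight_one]
  by_contra hne
  have hcomp : homogeneousComponent u.degree ψ ≠ 0 := fun h0 => hu <| by
    rw [← coeff_zero u, ← h0, coeff_homogeneousComponent, if_pos rfl]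
  refine hcomp ((mul_eq_zero.mp ?_).resolve_left hφ0)
  rw [← homogeneousComponent_mul_of_isHomogeneous_left hφ, homogeneousComponent_of_mem h,
    if_neg (by omega)]

theorem IsHomogeneous.le_of_dvd {φ ψ : MvPolynomial σ R} {m n : ℕ}
    (hφ : φ.IsHomogeneous m) (hψ : ψ.IsHomogeneous n) (hψ0 : ψ ≠ 0) (hdvd : φ ∣ ψ) :
    m ≤ n := by
  obtain ⟨c, rfl⟩ := hdvd
  rw [← hφ.totalDegree (left_ne_zero_of_mul hψ0), ← hψ.totalDegree hψ0,
    totalDegree_mul_of_isDomain (left_ne_zero_of_mul hψ0) (right_ne_zero_of_mul hψ0)]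
  exact Nat.le_add_right _ _

end MvPolynomial

section VNumber

open Ideal

variable {σ K : Type} [Field K]

theorem alphaDeg_span_singleton {h : MvPolynomial σ K} {N : ℕ} (hh : h.IsHomogeneous N)
    (hh0 : h ≠ 0) : alphaDeg (span {h}) = N := by
  have hN : N ∈ {d : ℕ | ∃ x ∈ span {h}, x ≠ 0 ∧ x.IsHomogeneous d} :=
    ⟨h, mem_span_singleton_self h, hh0, hh⟩
  refine le_antisymm (Nat.sInf_le hN) (le_csInf ⟨N, hN⟩ ?_)
  rintro v ⟨x, hx, hx0, hxv⟩
  exact hh.le_of_dvd hxv hx0 (mem_span_singleton.mp hx)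

theorem le_add_of_colon_eq_span {h π w : MvPolynomial σ K} {N δ v : ℕ}
    (hh : h.IsHomogeneous N) (hh0 : h ≠ 0) (hπ : π.IsHomogeneous δ) (hw : w.IsHomogeneous v)
    (hprime : (span {π}).IsPrime) (hcolon : (span {h}).colon (span {w}) = span {π}) :
    N ≤ δ + v := by
  have hπw : h ∣ π * w := by
    rw [← mem_span_singleton, ← mem_colon_span_singleton, hcolon]
    exact mem_span_singleton_self π
  have hπ0 : π ≠ 0 := by
    have hπh : π ∣ h := by
      rw [← mem_span_singleton, ← hcolon]
      exact le_colon (mem_span_singleton_self h)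
    exact ne_zero_of_dvd_ne_zero hh0 hπh
  have hw0 : w ≠ 0 := by
    rintro rfl
    apply hprime.ne_top
    rw [← hcolon, span_singleton_eq_bot.mpr rfl, Submodule.colon_bot]
  exact hh.le_of_dvd (hπ.mul hw) (mul_ne_zero hπ0 hw0) hπw

theorem vnumber_span_singleton_add {ι : Type*} {h : MvPolynomial σ K} {N : ℕ}
    (hh : h.IsHomogeneous N) (hh0 : h ≠ 0) {g : ι → MvPolynomial σ K} {d : ι → ℕ}
    (hg : ∀ i, (g i).IsHomogeneous (d i))
    (hass : assOf (span {h}) = Set.range fun i => span {g i}) {j : ι}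
    (hmax : ∀ i, d i ≤ d j) (hj : g j ∣ h) :
    vnumber (span {h}) + d j = N := by
  obtain ⟨q, rfl⟩ := hj
  have hq : q.IsHomogeneous (N - d j) := (hg j).of_mul_left (left_ne_zero_of_mul hh0) hh
  have hdj : d j ≤ N := (hg j).le_of_dvd hh hh0 (dvd_mul_right _ _)
  have hmem : N - d j ∈ {v : ℕ | ∃ p ∈ assOf (span {g j * q}), ∃ w : MvPolynomial σ K,
      w.IsHomogeneous v ∧ (span {g j * q}).colon (span {w}) = p} :=
    ⟨span {g j}, hass ▸ ⟨j, rfl⟩, q, hq,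
      colon_span_singleton_mul_self _ (right_ne_zero_of_mul hh0)⟩
  suffices vnumber (span {g j * q}) = N - d j by omega
  refine le_antisymm (Nat.sInf_le hmem) (le_csInf ⟨_, hmem⟩ ?_)
  rintro v ⟨p, hp, w, hw, rfl⟩
  obtain ⟨i, hi : span {g i} = _⟩ := hass ▸ hp
  have := le_add_of_colon_eq_span hh hh0 (hg i) hw (hi ▸ IsAssociatedPrime.isPrime hp) hi.symm
  have := hmax i
  omega

end VNumber

/-- Example 5.1: let `f = f_1^{a_1} ⋯ f_s^{a_s}` be a nonzero homogeneous
polynomial of positive degree, factored into pairwise non-associated homogeneous irreducible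
polynomials of nondecreasing degrees, and `I = (f)`.  Then for every `k ≥ 1`,
`Ass(I^k) = {(f_1),…,(f_s)}` and `v(I^k) = k·deg(f) − deg(f_s) = α(I)·k − deg(f_s)`. -/
theorem stmt15 {K : Type} [Field K] {n s : ℕ} (hs : 1 ≤ s)
    (g : Fin s → MvPolynomial (Fin n) K) (e d : Fin s → ℕ)
    (hirr : ∀ i, Irreducible (g i))
    (hhom : ∀ i, (g i).IsHomogeneous (d i))
    (hmono : Monotone d)
    (he : ∀ i, 1 ≤ e i)
    (f : MvPolynomial (Fin n) K) (hf : f = ∏ i, g i ^ e i) :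
    ∀ k : ℕ, 1 ≤ k →
      assOf (Ideal.span {f} ^ k) =
        Set.range (fun i => Ideal.span {g i}) ∧
      (vnumber (Ideal.span {f} ^ k) : ℤ) =
        (k : ℤ) * (f.totalDegree : ℤ) - (d ⟨s - 1, by omega⟩ : ℤ) ∧
      (vnumber (Ideal.span {f} ^ k) : ℤ) =
        (alphaDeg (Ideal.span {f}) : ℤ) * k - (d ⟨s - 1, by omega⟩ : ℤ) := by
  intro k hk
  set last : Fin s := ⟨s - 1, by omega⟩
  have hprime (i : Fin s) : Prime (g i) := (hirr i).prime
  have hfk : Ideal.span {f} ^ k = Ideal.span {∏ i, g i ^ (e i * k)} := by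
    simp only [Ideal.span_singleton_pow, hf, ← Finset.prod_pow, pow_mul]
  have hass : assOf (Ideal.span {f} ^ k) = Set.range fun i => Ideal.span {g i} :=
    hfk ▸ assOf_span_prod_pow g _ hprime fun i => Nat.mul_le_mul (he i) hk
  have hfD : f.IsHomogeneous (∑ i, d i * e i) :=
    hf ▸ IsHomogeneous.prod _ _ _ fun i _ => (hhom i).pow (e i)
  have hf0 : f ≠ 0 := hf ▸ Finset.prod_ne_zero_iff.mpr fun i _ => pow_ne_zero _ (hprime i).ne_zero
  have hlast : g last ∣ f ^ k :=
    ((dvd_pow_self _ (Nat.one_le_iff_ne_zero.mp (he last))).trans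
      (hf ▸ Finset.dvd_prod_of_mem _ (Finset.mem_univ last))).trans (dvd_pow_self f (Nat.one_le_iff_ne_zero.mp hk))
  have hv : vnumber (Ideal.span {f} ^ k) + d last = (∑ i, d i * e i) * k := by
    rw [Ideal.span_singleton_pow] at hass ⊢
    exact vnumber_span_singleton_add (hfD.pow k) (pow_ne_zero k hf0) hhom hass
      (fun i => hmono (Fin.le_iff_val_le_val.mpr (by change i.val ≤ s - 1; omega))) hlast
  rw [hfD.totalDegree hf0, alphaDeg_span_singleton hfD hf0]
  have hv' : (vnumber (Ideal.span {f} ^ k) : ℤ) + d last = (∑ i, d i * e i : ℕ) * k := by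
    exact_mod_cast hv
  exact ⟨hass, by linarith, by linarith⟩
end
end
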